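/- arXiv:1802.06954 — 4 statements merged into one kernel-verified Lean document; each statement's English description precedes it below -/
import Mathlib

section
/- Suppose X_1,…,X_n are independent symmetric random vectors with values in a real separable Banach space E, each satisfying the weak Borell inequality WB(C,δ,θ). Then the sum X_1+⋯+X_n satisfies WB(C′,δ,θ′), where C′ = 12·9^δ·C and θ′ = min{θ/2, (96C·9^δ)⁻¹}. -/
open MeasureTheory ProbabilityTheory
open scoped ENNReal BigOperators

noncomputable section

/-- A continuous norm on a real normed space `E` (a norm possibly different from the
ambient one, required to be continuous with respect to the ambient topology). -/
def IsContNorm {E : Type*} [NormedAddCommGroup E] [NormedSpace ℝ E] (N : E → ℝ) : Prop :=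
  Continuous N ∧ (∀ x y : E, N (x + y) ≤ N x + N y) ∧
    (∀ (c : ℝ) (x : E), N (c • x) = |c| * N x) ∧ ∀ x : E, N x = 0 → x = 0

/-- A random vector is symmetric if `X` and `-X` have the same distribution. -/
def IsSymmetricRV {Ω E : Type*} [MeasurableSpace Ω] [MeasurableSpace E] [Neg E]
    (μ : Measure Ω) (X : Ω → E) : Prop :=
  Measure.map X μ = Measure.map (fun ω => -(X ω)) μ

/-- `X` satisfies the weak Borell inequality `WB(C, δ, θ)`: for every continuous norm `N`
with `P(N(X) > 1) < θ`, one has `P(N(X) > λ) ≤ C λ^(-δ) P(N(X) > 1)` for all `λ ≥ 1`. -/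
def WeakBorell {Ω E : Type*} [MeasurableSpace Ω] [NormedAddCommGroup E] [NormedSpace ℝ E]
    (μ : Measure Ω) (X : Ω → E) (C δ θ : ℝ) : Prop :=
  ∀ N : E → ℝ, IsContNorm N → μ {ω | 1 < N (X ω)} < ENNReal.ofReal θ →
    ∀ lam : ℝ, 1 ≤ lam →
      μ {ω | lam < N (X ω)} ≤ ENNReal.ofReal (C * lam ^ (-δ)) * μ {ω | 1 < N (X ω)}

set_option linter.unusedSectionVars false
set_option linter.unusedVariables false
set_option maxHeartbeats 1000000

namespace WBTensorAux

variable {Ω E : Type*} [MeasurableSpace Ω] [NormedAddCommGroup E] [NormedSpace ℝ E]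
  [MeasurableSpace E] [BorelSpace E] [SecondCountableTopology E]
  {μ : Measure Ω} [IsProbabilityMeasure μ] {n : ℕ} {X : Fin n → Ω → E} {N : E → ℝ}

def psum {E : Type*} [NormedAddCommGroup E] {n : ℕ} (N : E → ℝ) (k : Fin n)
    (v : Fin n → E) : E := ∑ j ∈ Finset.Iic k, v j

def maxB {E : Type*} [NormedAddCommGroup E] {n : ℕ} (N : E → ℝ) (t : ℝ) (k : Fin n) :
    Set (Fin n → E) := {v | (∀ j, j < k → N (v j) ≤ t) ∧ t < N (v k)}

def levB {E : Type*} [NormedAddCommGroup E] {n : ℕ} (N : E → ℝ) (t : ℝ) (k : Fin n) :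
    Set (Fin n → E) := {v | (∀ j, j < k → N (psum N j v) ≤ t) ∧ t < N (psum N k v)}

theorem psum_continuous (N : E → ℝ) (k : Fin n) : Continuous (psum (E := E) N k) :=
  continuous_finset_sum _ fun j _ => continuous_apply j

theorem N_neg (hN : IsContNorm N) (x : E) : N (-x) = N x := by
  have := hN.2.2.1 (-1) x
  simpa using this

theorem N_zero (hN : IsContNorm N) : N 0 = 0 := by
  have := hN.2.2.1 0 0
  simpa using this

theorem N_nonneg (hN : IsContNorm N) (x : E) : 0 ≤ N x := by
  have h := hN.2.1 x (-x)
  rw [add_neg_cancel, N_zero hN, N_neg hN] at h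
  linarith

theorem N_two_smul (hN : IsContNorm N) (x : E) : N ((2:ℝ) • x) = 2 * N x := by
  rw [hN.2.2.1]; norm_num

theorem N_sub_le (hN : IsContNorm N) (x y : E) : N x - N y ≤ N (x - y) := by
  have := hN.2.1 (x - y) y
  simp only [sub_add_cancel] at this
  linarith

theorem vec_law (hXmeas : ∀ i, Measurable (X i))
    (hXindep : iIndepFun X μ) :
    Measure.map (fun ω (i : Fin n) => X i ω) μ = Measure.pi (fun i => Measure.map (X i) μ) := by
  haveI : ∀ i, IsProbabilityMeasure (Measure.map (X i) μ) :=
    fun i => Measure.isProbabilityMeasure_map (hXmeas i).aemeasurable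
  refine (Measure.pi_eq fun s hs => ?_).symm
  rw [Measure.map_apply (measurable_pi_lambda _ hXmeas) (MeasurableSet.univ_pi hs)]
  have : (fun ω (i : Fin n) => X i ω) ⁻¹' Set.pi Set.univ s = ⋂ i ∈ Finset.univ, X i ⁻¹' s i := by
    ext ω; simp [Set.mem_pi]
  rw [this, hXindep.measure_inter_preimage_eq_mul Finset.univ (fun i _ => hs i)]
  exact Finset.prod_congr rfl fun i _ => (Measure.map_apply (hXmeas i) (hs i)).symm

theorem flip_apply (hXmeas : ∀ i, Measurable (X i))
    (hXindep : iIndepFun X μ)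
    (hXsymm : ∀ i, IsSymmetricRV μ (X i))
    (ε : Fin n → ℝ) (hε : ∀ i, ε i = 1 ∨ ε i = -1)
    {B : Set (Fin n → E)} (hB : MeasurableSet B) :
    μ {ω | (fun i => ε i • X i ω) ∈ B} = μ {ω | (fun i => X i ω) ∈ B} := by
  have hYmeas : ∀ i, Measurable (fun ω => ε i • X i ω) :=
    fun i => (hXmeas i).const_smul (ε i)
  have hYindep : iIndepFun (fun i ω => ε i • X i ω) μ := by
    have := hXindep.comp (fun i (x : E) => ε i • x)
      (fun i => measurable_const_smul (ε i))
    exact this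
  have hmarg : ∀ i, Measure.map (fun ω => ε i • X i ω) μ = Measure.map (X i) μ := by
    intro i
    rcases hε i with h | h
    · simp [h]
    · have : (fun ω => ε i • X i ω) = fun ω => -(X i ω) := by
        funext ω; rw [h, neg_one_smul]
      rw [this, ← hXsymm i]
  have key : Measure.map (fun ω (i : Fin n) => ε i • X i ω) μ
      = Measure.map (fun ω (i : Fin n) => X i ω) μ := by
    rw [vec_law hXmeas hXindep, vec_law hYmeas hYindep]
    exact congrArg Measure.pi (funext hmarg)
  have h1 := Measure.map_apply (measurable_pi_lambda _ hYmeas) hB (μ := μ)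
  have h2 := Measure.map_apply (measurable_pi_lambda _ hXmeas) hB (μ := μ)
  calc μ {ω | (fun i => ε i • X i ω) ∈ B}
      = Measure.map (fun ω (i : Fin n) => ε i • X i ω) μ B := by rw [h1]; rfl
    _ = Measure.map (fun ω (i : Fin n) => X i ω) μ B := by rw [key]
    _ = μ {ω | (fun i => X i ω) ∈ B} := by rw [h2]; rfl

theorem half (hN : IsContNorm N) (hXmeas : ∀ i, Measurable (X i))
    (hXindep : iIndepFun X μ)
    (hXsymm : ∀ i, IsSymmetricRV μ (X i))
    (ε : Fin n → ℝ) (hε : ∀ i, ε i = 1 ∨ ε i = -1)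
    {B : Set (Fin n → E)} (hB : MeasurableSet B)
    (hinv : ∀ v : Fin n → E, (fun j => ε j • v j) ∈ B ↔ v ∈ B) {t : ℝ}
    (hcov : ∀ v ∈ B, 2 * t < N ((∑ j, v j) + ∑ j, ε j • v j)) :
    μ {ω | (fun i => X i ω) ∈ B}
      ≤ 2 * μ ({ω | (fun i => X i ω) ∈ B} ∩ {ω | t < N (∑ j, X j ω)}) := by
  set B' : Set (Fin n → E) := B ∩ {v | t < N (∑ j, v j)} with hB'def
  have hB' : MeasurableSet B' :=
    hB.inter <| measurableSet_lt measurable_const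
      ((hN.1.comp (continuous_finset_sum _ fun j _ => continuous_apply j)).measurable)
  have hsub : {ω | (fun i => X i ω) ∈ B}
      ⊆ {ω | (fun i => X i ω) ∈ B'} ∪ {ω | (fun i => ε i • X i ω) ∈ B'} := by
    intro ω hω
    have hv : (fun i => X i ω) ∈ B := hω
    have h2 := hcov _ hv
    have h3 : N ((∑ j, X j ω) + ∑ j, ε j • X j ω)
        ≤ N (∑ j, X j ω) + N (∑ j, ε j • X j ω) := hN.2.1 _ _
    rcases lt_or_ge t (N (∑ j, X j ω)) with h | h
    · exact Or.inl ⟨hv, h⟩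
    · refine Or.inr ⟨(hinv _).mpr hv, ?_⟩
      show t < N (∑ j, ε j • X j ω)
      linarith
  have hflip : μ {ω | (fun i => ε i • X i ω) ∈ B'} = μ {ω | (fun i => X i ω) ∈ B'} :=
    flip_apply hXmeas hXindep hXsymm ε hε hB'
  have heq : {ω | (fun i => X i ω) ∈ B'}
      = {ω | (fun i => X i ω) ∈ B} ∩ {ω | t < N (∑ j, X j ω)} := rfl
  calc μ {ω | (fun i => X i ω) ∈ B}
      ≤ μ ({ω | (fun i => X i ω) ∈ B'} ∪ {ω | (fun i => ε i • X i ω) ∈ B'}) :=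
        measure_mono hsub
    _ ≤ μ {ω | (fun i => X i ω) ∈ B'} + μ {ω | (fun i => ε i • X i ω) ∈ B'} :=
        measure_union_le _ _
    _ = 2 * μ ({ω | (fun i => X i ω) ∈ B} ∩ {ω | t < N (∑ j, X j ω)}) := by
        rw [hflip, heq, two_mul]

theorem flip_sum_eq (K : Finset (Fin n)) (v : Fin n → E) :
    (∑ j, v j) + ∑ j, (if j ∈ K then (1:ℝ) else -1) • v j = (2:ℝ) • ∑ j ∈ K, v j := by
  have h : ∀ j, v j + (if j ∈ K then (1:ℝ) else -1) • v j
      = if j ∈ K then (2:ℝ) • v j else 0 := by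
    intro j; by_cases hj : j ∈ K <;> simp [hj, two_smul]
  rw [← Finset.sum_add_distrib, Finset.sum_congr rfl (fun j _ => h j),
    Finset.sum_ite_mem, Finset.univ_inter, Finset.smul_sum]

theorem subset_sum (hN : IsContNorm N) (hXmeas : ∀ i, Measurable (X i))
    (hXindep : iIndepFun X μ)
    (hXsymm : ∀ i, IsSymmetricRV μ (X i)) (K : Finset (Fin n)) (t : ℝ) :
    μ {ω | t < N (∑ j ∈ K, X j ω)} ≤ 2 * μ {ω | t < N (∑ j, X j ω)} := by
  classical
  set ε : Fin n → ℝ := fun j => if j ∈ K then 1 else -1 with hεdef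
  have hε : ∀ i, ε i = 1 ∨ ε i = -1 := fun i => by by_cases h : i ∈ K <;> simp [hεdef, h]
  set B : Set (Fin n → E) := {v | t < N (∑ j ∈ K, v j)} with hBdef
  have hB : MeasurableSet B :=
    measurableSet_lt measurable_const
      ((hN.1.comp (continuous_finset_sum _ fun j _ => continuous_apply j)).measurable)
  have hKsum : ∀ v : Fin n → E, (∑ j ∈ K, ε j • v j) = ∑ j ∈ K, v j :=
    fun v => Finset.sum_congr rfl fun j hj => by simp [hεdef, hj]
  have hinv : ∀ v : Fin n → E, (fun j => ε j • v j) ∈ B ↔ v ∈ B := by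
    intro v
    simp only [hBdef, Set.mem_setOf_eq, hKsum]
  have hcov : ∀ v ∈ B, 2 * t < N ((∑ j, v j) + ∑ j, ε j • v j) := by
    intro v hv
    rw [hεdef, flip_sum_eq K v, N_two_smul hN]
    have : t < N (∑ j ∈ K, v j) := hv
    linarith
  calc μ {ω | (fun i => X i ω) ∈ B}
      ≤ 2 * μ ({ω | (fun i => X i ω) ∈ B} ∩ {ω | t < N (∑ j, X j ω)}) :=
        half hN hXmeas hXindep hXsymm ε hε hB hinv hcov
    _ ≤ 2 * μ {ω | t < N (∑ j, X j ω)} := by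
        gcongr; exact Set.inter_subset_right

theorem levy_family (hN : IsContNorm N) (hXmeas : ∀ i, Measurable (X i))
    (hXindep : iIndepFun X μ)
    (hXsymm : ∀ i, IsSymmetricRV μ (X i))
    {B : Fin n → Set (Fin n → E)} (hBmeas : ∀ k, MeasurableSet (B k))
    (hdisj : Pairwise (Function.onFun Disjoint B))
    (ε : Fin n → Fin n → ℝ) (hε : ∀ k i, ε k i = 1 ∨ ε k i = -1)
    (hinv : ∀ k (v : Fin n → E), (fun j => ε k j • v j) ∈ B k ↔ v ∈ B k) {t : ℝ}
    (hcov : ∀ k, ∀ v ∈ B k, 2 * t < N ((∑ j, v j) + ∑ j, ε k j • v j)) :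
    ∑ k, μ {ω | (fun i => X i ω) ∈ B k} ≤ 2 * μ {ω | t < N (∑ j, X j ω)} := by
  have hvec : Measurable (fun ω (i : Fin n) => X i ω) := measurable_pi_lambda _ hXmeas
  have hT : MeasurableSet {ω | t < N (∑ j, X j ω)} := by
    refine measurableSet_lt measurable_const ?_
    exact (hN.1.measurable).comp (Finset.measurable_sum _ fun j _ => hXmeas j)
  calc ∑ k, μ {ω | (fun i => X i ω) ∈ B k}
      ≤ ∑ k, 2 * μ ({ω | (fun i => X i ω) ∈ B k} ∩ {ω | t < N (∑ j, X j ω)}) := by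
        refine Finset.sum_le_sum fun k _ => ?_
        exact half hN hXmeas hXindep hXsymm (ε k) (hε k) (hBmeas k) (hinv k) (hcov k)
    _ = 2 * ∑ k, μ ({ω | (fun i => X i ω) ∈ B k} ∩ {ω | t < N (∑ j, X j ω)}) := by
        rw [Finset.mul_sum]
    _ ≤ 2 * μ {ω | t < N (∑ j, X j ω)} := by
        gcongr
        have := measure_iUnion (μ := μ)
          (f := fun k => {ω | (fun i => X i ω) ∈ B k} ∩ {ω | t < N (∑ j, X j ω)})
          (fun k l hkl => by
            refine ((hdisj hkl).preimage (fun ω (i : Fin n) => X i ω)).mono ?_ ?_ <;>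
              exact Set.inter_subset_left)
          (fun k => (hvec (hBmeas k)).inter hT)
        rw [← tsum_fintype (L := SummationFilter.unconditional _), ← this]
        exact measure_mono (Set.iUnion_subset fun k => Set.inter_subset_right)

def extK (K : Finset (Fin n)) (w : {i // i ∈ K} → E) : Fin n → E :=
  fun m => if h : m ∈ K then w ⟨m, h⟩ else 0

theorem extK_measurable (K : Finset (Fin n)) : Measurable (extK (E := E) K) := by
  refine measurable_pi_lambda _ fun m => ?_
  unfold extK
  by_cases h : m ∈ K
  · simp only [h, dif_pos]; exact measurable_pi_apply _
  · simp only [h, dif_neg, not_false_iff]; exact measurable_const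

theorem block_indep (hXmeas : ∀ i, Measurable (X i))
    (hXindep : iIndepFun X μ)
    (K : Finset (Fin n)) {B B' : Set (Fin n → E)}
    (hB : MeasurableSet B) (hB' : MeasurableSet B')
    (hdB : ∀ v w : Fin n → E, (∀ j ∈ K, v j = w j) → (v ∈ B ↔ w ∈ B))
    (hdB' : ∀ v w : Fin n → E, (∀ j ∉ K, v j = w j) → (v ∈ B' ↔ w ∈ B')) :
    μ ({ω | (fun i => X i ω) ∈ B} ∩ {ω | (fun i => X i ω) ∈ B'})
      = μ {ω | (fun i => X i ω) ∈ B} * μ {ω | (fun i => X i ω) ∈ B'} := by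
  classical
  have hindep := hXindep.indepFun_finset K Kᶜ disjoint_compl_right hXmeas
  have h1 : {ω | (fun i => X i ω) ∈ B}
      = (fun ω (i : {x // x ∈ K}) => X i ω) ⁻¹' (extK K ⁻¹' B) := by
    ext ω
    simp only [Set.mem_setOf_eq, Set.mem_preimage]
    exact hdB _ _ (fun j hj => by simp [extK, hj])
  have h2 : {ω | (fun i => X i ω) ∈ B'}
      = (fun ω (i : {x // x ∈ Kᶜ}) => X i ω) ⁻¹' (extK Kᶜ ⁻¹' B') := by
    ext ω
    simp only [Set.mem_setOf_eq, Set.mem_preimage]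
    refine hdB' _ _ fun j hj => ?_
    have hj' : j ∈ Kᶜ := Finset.mem_compl.mpr hj
    simp [extK, hj']
  rw [h1, h2]
  exact hindep.measure_inter_preimage_eq_mul _ _
    (extK_measurable K hB) (extK_measurable Kᶜ hB')

theorem maxB_meas (hN : IsContNorm N) (t : ℝ) (k : Fin n) :
    MeasurableSet (maxB N t k) := by
  have h1 : MeasurableSet {v : Fin n → E | t < N (v k)} :=
    measurableSet_lt measurable_const ((hN.1.comp (continuous_apply k)).measurable)
  have h2 : ∀ j : Fin n, MeasurableSet {v : Fin n → E | N (v j) ≤ t} := fun j =>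
    measurableSet_le ((hN.1.comp (continuous_apply j)).measurable) measurable_const
  have : maxB N t k = (⋂ j, ⋂ _ : j < k, {v : Fin n → E | N (v j) ≤ t})
      ∩ {v : Fin n → E | t < N (v k)} := by
    ext v; simp [maxB, Set.mem_iInter, and_comm]
  rw [this]
  exact (MeasurableSet.iInter fun j => MeasurableSet.iInter fun _ => h2 j).inter h1

theorem levB_meas (hN : IsContNorm N) (t : ℝ) (k : Fin n) :
    MeasurableSet (levB N t k) := by
  have h1 : ∀ j : Fin n, MeasurableSet {v : Fin n → E | t < N (psum N j v)} := fun j =>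
    measurableSet_lt measurable_const ((hN.1.comp (psum_continuous N j)).measurable)
  have h2 : ∀ j : Fin n, MeasurableSet {v : Fin n → E | N (psum N j v) ≤ t} := fun j =>
    measurableSet_le ((hN.1.comp (psum_continuous N j)).measurable) measurable_const
  have : levB N t k = (⋂ j, ⋂ _ : j < k, {v : Fin n → E | N (psum N j v) ≤ t})
      ∩ {v : Fin n → E | t < N (psum N k v)} := by
    ext v; simp [levB, Set.mem_iInter, and_comm]
  rw [this]
  exact (MeasurableSet.iInter fun j => MeasurableSet.iInter fun _ => h2 j).inter (h1 k)

theorem maxB_disj (t : ℝ) : Pairwise (Function.onFun Disjoint (maxB (E := E) (n := n) N t)) := by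
  have key : ∀ k l : Fin n, k < l → Disjoint (maxB (E := E) N t k) (maxB N t l) := by
    intro k l hkl
    rw [Set.disjoint_left]
    rintro v ⟨_, hvk⟩ ⟨hl, _⟩
    exact absurd hvk (not_lt.mpr (hl k hkl))
  intro k l hkl
  rcases Ne.lt_or_gt hkl with h | h
  · exact key k l h
  · exact (key l k h).symm

theorem levB_disj (t : ℝ) : Pairwise (Function.onFun Disjoint (levB (E := E) (n := n) N t)) := by
  have key : ∀ k l : Fin n, k < l → Disjoint (levB (E := E) N t k) (levB N t l) := by
    intro k l hkl
    rw [Set.disjoint_left]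
    rintro v ⟨_, hvk⟩ ⟨hl, _⟩
    exact absurd hvk (not_lt.mpr (hl k hkl))
  intro k l hkl
  rcases Ne.lt_or_gt hkl with h | h
  · exact key k l h
  · exact (key l k h).symm

theorem max_levy (hN : IsContNorm N) (hXmeas : ∀ i, Measurable (X i))
    (hXindep : iIndepFun X μ)
    (hXsymm : ∀ i, IsSymmetricRV μ (X i)) (t : ℝ) :
    μ (⋃ i, {ω | t < N (X i ω)}) ≤ 2 * μ {ω | t < N (∑ j, X j ω)} := by
  classical
  set ε : Fin n → Fin n → ℝ := fun k j => if j ∈ ({k} : Finset (Fin n)) then 1 else -1 with hεdef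
  have hε : ∀ k i, ε k i = 1 ∨ ε k i = -1 := fun k i => by
    by_cases h : i = k <;> simp [hεdef, h]
  have hNinv : ∀ (k j : Fin n) (x : E), N (ε k j • x) = N x := by
    intro k j x
    rcases hε k j with h | h
    · rw [h, one_smul]
    · rw [h, neg_one_smul, N_neg hN]
  have hinv : ∀ k (v : Fin n → E), (fun j => ε k j • v j) ∈ maxB N t k ↔ v ∈ maxB N t k := by
    intro k v
    simp only [maxB, Set.mem_setOf_eq, hNinv]
  have hcov : ∀ k, ∀ v ∈ maxB N t k,
      2 * t < N ((∑ j, v j) + ∑ j, ε k j • v j) := by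
    intro k v hv
    have := flip_sum_eq ({k} : Finset (Fin n)) v
    rw [hεdef]
    rw [this, Finset.sum_singleton, N_two_smul hN]
    have : t < N (v k) := hv.2
    linarith
  have hcover : (⋃ i, {ω | t < N (X i ω)}) ⊆ ⋃ k, {ω | (fun i => X i ω) ∈ maxB N t k} := by
    intro ω hω
    simp only [Set.mem_iUnion, Set.mem_setOf_eq] at hω ⊢
    obtain ⟨i, hi⟩ := hω
    have hne : (Finset.univ.filter (fun k => t < N (X k ω))).Nonempty :=
      ⟨i, by simp [hi]⟩
    set k₀ := (Finset.univ.filter (fun k => t < N (X k ω))).min' hne with hk₀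
    have hk₀mem := (Finset.univ.filter (fun k => t < N (X k ω))).min'_mem hne
    refine ⟨k₀, fun j hj => ?_, (Finset.mem_filter.mp hk₀mem).2⟩
    by_contra hcon
    push_neg at hcon
    have : k₀ ≤ j := Finset.min'_le _ j (by simp [hcon])
    exact absurd hj (not_lt.mpr this)
  calc μ (⋃ i, {ω | t < N (X i ω)})
      ≤ μ (⋃ k, {ω | (fun i => X i ω) ∈ maxB N t k}) := measure_mono hcover
    _ ≤ ∑ k, μ {ω | (fun i => X i ω) ∈ maxB N t k} := by
        rw [← tsum_fintype (L := SummationFilter.unconditional _)]; exact measure_iUnion_le _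
    _ ≤ 2 * μ {ω | t < N (∑ j, X j ω)} :=
        levy_family hN hXmeas hXindep hXsymm (maxB_meas hN t) (maxB_disj t) ε hε hinv hcov

theorem lev_levy (hN : IsContNorm N) (hXmeas : ∀ i, Measurable (X i))
    (hXindep : iIndepFun X μ)
    (hXsymm : ∀ i, IsSymmetricRV μ (X i)) (t : ℝ) :
    ∑ k, μ {ω | (fun i => X i ω) ∈ levB N t k} ≤ 2 * μ {ω | t < N (∑ j, X j ω)} := by
  classical
  set ε : Fin n → Fin n → ℝ := fun k j => if j ∈ Finset.Iic k then 1 else -1 with hεdef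
  have hε : ∀ k i, ε k i = 1 ∨ ε k i = -1 := fun k i => by
    by_cases h : i ≤ k
    · left; simp [hεdef, h]
    · right; simp [hεdef, h]
  have hpsum : ∀ (k j : Fin n), j ≤ k → ∀ v : Fin n → E,
      psum N j (fun i => ε k i • v i) = psum N j v := by
    intro k j hjk v
    refine Finset.sum_congr rfl fun i hi => ?_
    have : i ∈ Finset.Iic k :=
      Finset.mem_Iic.mpr ((Finset.mem_Iic.mp hi).trans hjk)
    simp [hεdef, Finset.mem_Iic.mp this]
  have hinv : ∀ k (v : Fin n → E), (fun j => ε k j • v j) ∈ levB N t k ↔ v ∈ levB N t k := by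
    intro k v
    simp only [levB, Set.mem_setOf_eq]
    constructor
    · rintro ⟨h1, h2⟩
      rw [hpsum k k le_rfl v] at h2
      exact ⟨fun j hj => by have := h1 j hj; rwa [hpsum k j hj.le v] at this, h2⟩
    · rintro ⟨h1, h2⟩
      rw [← hpsum k k le_rfl v] at h2
      exact ⟨fun j hj => by rw [hpsum k j hj.le v]; exact h1 j hj, h2⟩
  have hcov : ∀ k, ∀ v ∈ levB N t k, 2 * t < N ((∑ j, v j) + ∑ j, ε k j • v j) := by
    intro k v hv
    rw [hεdef, flip_sum_eq (Finset.Iic k) v, N_two_smul hN]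
    have : t < N (psum N k v) := hv.2
    unfold psum at this
    linarith
  exact levy_family hN hXmeas hXindep hXsymm (levB_meas hN t) (levB_disj t) ε hε hinv hcov

theorem hj (hN : IsContNorm N) (hXmeas : ∀ i, Measurable (X i))
    (hXindep : iIndepFun X μ)
    (hXsymm : ∀ i, IsSymmetricRV μ (X i)) {t : ℝ} (ht : 0 < t) :
    μ {ω | 3 * t < N (∑ j, X j ω)} ≤ μ (⋃ i, {ω | t < N (X i ω)})
      + (2 * μ {ω | t < N (∑ j, X j ω)}) * (2 * μ {ω | t < N (∑ j, X j ω)}) := by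
  classical
  set tail : Fin n → Set Ω := fun k => {ω | t < N (∑ j ∈ Finset.Ioi k, X j ω)} with htaildef
  -- the inclusion
  have hincl : {ω | 3 * t < N (∑ j, X j ω)} ⊆ (⋃ i, {ω | t < N (X i ω)})
      ∪ ⋃ k, ({ω | (fun i => X i ω) ∈ levB N t k} ∩ tail k) := by
    intro ω hω
    by_cases hmax : ∃ i, t < N (X i ω)
    · exact Or.inl (Set.mem_iUnion.mpr ⟨hmax.choose, hmax.choose_spec⟩)
    push_neg at hmax
    set v : Fin n → E := fun i => X i ω with hvdef
    have hS : 3 * t < N (∑ j, v j) := hω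
    -- n is positive
    have hne : (Finset.univ : Finset (Fin n)).Nonempty := by
      by_contra h
      rw [Finset.not_nonempty_iff_eq_empty] at h
      rw [h, Finset.sum_empty, N_zero hN] at hS
      linarith
    have hktop : ∃ k : Fin n, t < N (psum N k v) := by
      refine ⟨Finset.univ.max' hne, ?_⟩
      have : Finset.Iic (Finset.univ.max' hne) = Finset.univ := by
        ext j; simp [Finset.mem_Iic, Finset.le_max' _ j (Finset.mem_univ j)]
      unfold psum
      rw [this]
      linarith
    set s : Finset (Fin n) := Finset.univ.filter (fun k => t < N (psum N k v)) with hsdef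
    have hsne : s.Nonempty := ⟨hktop.choose, by simp [hsdef, hktop.choose_spec]⟩
    set k₀ := s.min' hsne with hk₀def
    have hk₀mem : t < N (psum N k₀ v) := by
      have hmem : k₀ ∈ s := s.min'_mem hsne
      rw [hsdef] at hmem
      exact (Finset.mem_filter.mp hmem).2
    have hmin : ∀ j, j < k₀ → N (psum N j v) ≤ t := by
      intro j hj
      by_contra hcon
      push_neg at hcon
      have : k₀ ≤ j := Finset.min'_le _ j (by simp [hsdef, hcon])
      exact absurd hj (not_lt.mpr this)
    -- N (psum k₀ v) ≤ 2t
    have hIio : N (∑ j ∈ Finset.Iio k₀, v j) ≤ t := by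
      rcases Finset.eq_empty_or_nonempty (Finset.Iio k₀) with h | h
      · rw [h, Finset.sum_empty, N_zero hN]; linarith
      · set j₀ := (Finset.Iio k₀).max' h with hj₀def
        have hj₀lt : j₀ < k₀ := Finset.mem_Iio.mp ((Finset.Iio k₀).max'_mem h)
        have : Finset.Iic j₀ = Finset.Iio k₀ := by
          ext j
          simp only [Finset.mem_Iic, Finset.mem_Iio]
          constructor
          · exact fun hj => lt_of_le_of_lt hj hj₀lt
          · exact fun hj => Finset.le_max' _ j (Finset.mem_Iio.mpr hj)
        have h2 := hmin j₀ hj₀lt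
        unfold psum at h2
        rwa [this] at h2
    have hpsum2t : N (psum N k₀ v) ≤ 2 * t := by
      have hsplit : psum N k₀ v = (∑ j ∈ Finset.Iio k₀, v j) + v k₀ := by
        unfold psum
        rw [← Finset.Iio_insert k₀, Finset.sum_insert (Finset.notMem_Iio_self), add_comm]
      rw [hsplit]
      have := hN.2.1 (∑ j ∈ Finset.Iio k₀, v j) (v k₀)
      have := hmax k₀
      linarith
    -- tail bound
    have hsplitall : (∑ j, v j) = psum N k₀ v + ∑ j ∈ Finset.Ioi k₀, v j := by
      unfold psum
      rw [← Finset.sum_union]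
      · congr 1
        ext j
        simp only [Finset.mem_union, Finset.mem_Iic, Finset.mem_Ioi, Finset.mem_univ, true_iff]
        exact le_or_gt j k₀
      · rw [Finset.disjoint_left]
        intro j hj hj'
        exact absurd (Finset.mem_Ioi.mp hj') (not_lt.mpr (Finset.mem_Iic.mp hj))
    have htailbd : t < N (∑ j ∈ Finset.Ioi k₀, v j) := by
      have h1 : N (∑ j, v j) - N (psum N k₀ v) ≤ N ((∑ j, v j) - psum N k₀ v) :=
        N_sub_le hN _ _
      have h2 : (∑ j, v j) - psum N k₀ v = ∑ j ∈ Finset.Ioi k₀, v j := by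
        rw [hsplitall]; abel
      rw [h2] at h1
      linarith
    exact Or.inr (Set.mem_iUnion.mpr ⟨k₀, ⟨⟨hmin, hk₀mem⟩, htailbd⟩⟩)
  -- measure bound
  have hstep : ∀ k, μ ({ω | (fun i => X i ω) ∈ levB N t k} ∩ tail k)
      = μ {ω | (fun i => X i ω) ∈ levB N t k} * μ {ω | (fun i => X i ω) ∈
        ({v : Fin n → E | t < N (∑ j ∈ Finset.Ioi k, v j)})} := by
    intro k
    have htail_eq : tail k = {ω | (fun i => X i ω) ∈
        ({v : Fin n → E | t < N (∑ j ∈ Finset.Ioi k, v j)})} := rfl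
    rw [htail_eq]
    refine block_indep hXmeas hXindep (Finset.Iic k) (levB_meas hN t k) ?_ ?_ ?_
    · exact measurableSet_lt measurable_const
        ((hN.1.comp (continuous_finset_sum _ fun j _ => continuous_apply j)).measurable)
    · intro v w hvw
      have hps : ∀ j : Fin n, j ≤ k → psum N j v = psum N j w := by
        intro j hj
        refine Finset.sum_congr rfl fun i hi => ?_
        exact hvw i (Finset.mem_Iic.mpr ((Finset.mem_Iic.mp hi).trans hj))
      simp only [levB, Set.mem_setOf_eq]
      constructor
      · rintro ⟨h1, h2⟩
        exact ⟨fun j hj => by rw [← hps j hj.le]; exact h1 j hj, by rwa [← hps k le_rfl]⟩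
      · rintro ⟨h1, h2⟩
        exact ⟨fun j hj => by rw [hps j hj.le]; exact h1 j hj, by rwa [hps k le_rfl]⟩
    · intro v w hvw
      have : (∑ j ∈ Finset.Ioi k, v j) = ∑ j ∈ Finset.Ioi k, w j := by
        refine Finset.sum_congr rfl fun i hi => ?_
        exact hvw i (by simp only [Finset.mem_Iic, not_le]; exact Finset.mem_Ioi.mp hi)
      simp only [Set.mem_setOf_eq, this]
  have htail_le : ∀ k, μ {ω | (fun i => X i ω) ∈
      ({v : Fin n → E | t < N (∑ j ∈ Finset.Ioi k, v j)})}
        ≤ 2 * μ {ω | t < N (∑ j, X j ω)} := by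
    intro k
    exact subset_sum hN hXmeas hXindep hXsymm (Finset.Ioi k) t
  calc μ {ω | 3 * t < N (∑ j, X j ω)}
      ≤ μ ((⋃ i, {ω | t < N (X i ω)})
        ∪ ⋃ k, ({ω | (fun i => X i ω) ∈ levB N t k} ∩ tail k)) := measure_mono hincl
    _ ≤ μ (⋃ i, {ω | t < N (X i ω)})
        + μ (⋃ k, ({ω | (fun i => X i ω) ∈ levB N t k} ∩ tail k)) := measure_union_le _ _
    _ ≤ μ (⋃ i, {ω | t < N (X i ω)})
        + ∑ k, μ ({ω | (fun i => X i ω) ∈ levB N t k} ∩ tail k) := by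
        gcongr
        rw [← tsum_fintype (L := SummationFilter.unconditional _)]; exact measure_iUnion_le _
    _ ≤ μ (⋃ i, {ω | t < N (X i ω)})
        + (2 * μ {ω | t < N (∑ j, X j ω)}) * (2 * μ {ω | t < N (∑ j, X j ω)}) := by
        gcongr μ (⋃ i, {ω | t < N (X i ω)}) + ?_
        calc ∑ k, μ ({ω | (fun i => X i ω) ∈ levB N t k} ∩ tail k)
            ≤ ∑ k, μ {ω | (fun i => X i ω) ∈ levB N t k}
              * (2 * μ {ω | t < N (∑ j, X j ω)}) := by
              refine Finset.sum_le_sum fun k _ => ?_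
              rw [hstep k]
              exact mul_le_mul_right (htail_le k) _
          _ = (∑ k, μ {ω | (fun i => X i ω) ∈ levB N t k})
              * (2 * μ {ω | t < N (∑ j, X j ω)}) := by rw [Finset.sum_mul]
          _ ≤ (2 * μ {ω | t < N (∑ j, X j ω)}) * (2 * μ {ω | t < N (∑ j, X j ω)}) := by
              exact mul_le_mul_left (lev_levy hN hXmeas hXindep hXsymm t) _

end WBTensorAux

/-- **Theorem 2 (tensorisation of the weak Borell inequality).** If independent symmetric
random vectors each satisfy `WB(C, δ, θ)`, then their sum satisfies `WB(C', δ, θ')` with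
`C' = 12 · 9^δ · C` and `θ' = min {θ/2, (96 C · 9^δ)⁻¹}`. -/
theorem weakBorell_tensorisation
    {Ω E : Type*} [MeasurableSpace Ω] [NormedAddCommGroup E] [NormedSpace ℝ E]
    [CompleteSpace E] [TopologicalSpace.SeparableSpace E] [MeasurableSpace E] [BorelSpace E]
    (μ : Measure Ω) [IsProbabilityMeasure μ] (n : ℕ)
    (X : Fin n → Ω → E) (hXmeas : ∀ i, Measurable (X i))
    (hXindep : iIndepFun X μ)
    (hXsymm : ∀ i, IsSymmetricRV μ (X i))
    (C δ θ : ℝ) (hC : 1 ≤ C) (hδ : 0 < δ) (hθ0 : 0 < θ) (hθ1 : θ < 1)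
    (hWB : ∀ i, WeakBorell μ (X i) C δ θ) :
    WeakBorell μ (fun ω => ∑ i, X i ω) (12 * (9 : ℝ) ^ δ * C) δ
      (min (θ / 2) (96 * C * (9 : ℝ) ^ δ)⁻¹) := by
  haveI : SecondCountableTopology E := UniformSpace.secondCountable_of_separable E
  intro N hN hsmall lam hlam
  -- basic positivity facts
  have h9 : (1:ℝ) ≤ (9:ℝ) ^ δ := Real.one_le_rpow (by norm_num) hδ.le
  have h3 : (1:ℝ) ≤ (3:ℝ) ^ δ := Real.one_le_rpow (by norm_num) hδ.le
  have h3pos : (0:ℝ) < (3:ℝ) ^ δ := lt_of_lt_of_le one_pos h3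
  have h9pos : (0:ℝ) < (9:ℝ) ^ δ := lt_of_lt_of_le one_pos h9
  have hCpos : (0:ℝ) < C := lt_of_lt_of_le one_pos hC
  -- abbreviations
  set A : ℝ → ℝ≥0∞ := fun t => μ {ω | t < N (∑ i, X i ω)} with hAdef
  set a : ℝ → ℝ := fun t => (A t).toReal with hadef
  have hAne : ∀ t, A t ≠ ⊤ := fun t => measure_ne_top μ _
  have hanonneg : ∀ t, 0 ≤ a t := fun t => ENNReal.toReal_nonneg
  have hamono : ∀ s t : ℝ, s ≤ t → a t ≤ a s := by
    intro s t hst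
    refine ENNReal.toReal_le_toReal (hAne t) (hAne s) |>.mpr ?_
    exact measure_mono fun ω hω => lt_of_le_of_lt hst hω
  -- the hypothesis on a 1
  have hsmall' : A 1 < ENNReal.ofReal (min (θ / 2) (96 * C * (9:ℝ) ^ δ)⁻¹) := hsmall
  have ha1 : a 1 < min (θ / 2) (96 * C * (9:ℝ) ^ δ)⁻¹ :=
    ENNReal.lt_ofReal_iff_toReal_lt (hAne 1) |>.mp hsmall'
  have ha1θ : a 1 < θ / 2 := lt_of_lt_of_le ha1 (min_le_left _ _)
  have ha1ε : a 1 < (96 * C * (9:ℝ) ^ δ)⁻¹ := lt_of_lt_of_le ha1 (min_le_right _ _)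
  have h96 : (96:ℝ) ≤ 96 * C * (9:ℝ) ^ δ := by nlinarith
  have ha196 : a 1 * (96 * C * (9:ℝ) ^ δ) ≤ 1 := by
    have h0 : (0:ℝ) < 96 * C * (9:ℝ) ^ δ := by positivity
    calc a 1 * (96 * C * (9:ℝ) ^ δ) ≤ (96 * C * (9:ℝ) ^ δ)⁻¹ * (96 * C * (9:ℝ) ^ δ) := by
          exact mul_le_mul_of_nonneg_right ha1ε.le h0.le
      _ = 1 := inv_mul_cancel₀ h0.ne'
  have ha1small : a 1 ≤ 1 / 96 := by
    have h0 : (0:ℝ) < 96 * C * (9:ℝ) ^ δ := by positivity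
    nlinarith
  -- individual tail probabilities
  set p : Fin n → ℝ → ℝ := fun i t => (μ {ω | t < N (X i ω)}).toReal with hpdef
  have hpne : ∀ i t, μ {ω | t < N (X i ω)} ≠ ⊤ := fun i t => measure_ne_top μ _
  have hpnonneg : ∀ i t, 0 ≤ p i t := fun i t => ENNReal.toReal_nonneg
  have hp2a : ∀ i t, p i t ≤ 2 * a t := by
    intro i t
    have h := WBTensorAux.subset_sum hN hXmeas hXindep hXsymm ({i} : Finset (Fin n)) t
    simp only [Finset.sum_singleton] at h
    have := ENNReal.toReal_le_toReal (hpne i t)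
      (by exact ENNReal.mul_ne_top (by norm_num) (hAne t)) |>.mpr h
    rwa [ENNReal.toReal_mul, ENNReal.toReal_ofNat] at this
  -- maximum of the summands
  set M : ℝ → ℝ := fun t => (μ (⋃ i, {ω | t < N (X i ω)})).toReal with hMdef
  have hMne : ∀ t, μ (⋃ i, {ω | t < N (X i ω)}) ≠ ⊤ := fun t => measure_ne_top μ _
  have hM2a : ∀ t, M t ≤ 2 * a t := by
    intro t
    have h := WBTensorAux.max_levy hN hXmeas hXindep hXsymm t
    have := ENNReal.toReal_le_toReal (hMne t)
      (ENNReal.mul_ne_top (by norm_num) (hAne t)) |>.mpr h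
    rwa [ENNReal.toReal_mul, ENNReal.toReal_ofNat] at this
  have hMsum : ∀ t, M t ≤ ∑ i, p i t := by
    intro t
    have h : μ (⋃ i, {ω | t < N (X i ω)}) ≤ ∑ i, μ {ω | t < N (X i ω)} := by
      rw [← tsum_fintype (L := SummationFilter.unconditional _)]; exact measure_iUnion_le _
    have := ENNReal.toReal_le_toReal (hMne t)
      (by exact ENNReal.sum_ne_top.mpr fun i _ => hpne i t) |>.mpr h
    rwa [ENNReal.toReal_sum fun i _ => hpne i t] at this
  -- sum of individual tails at level 1
  have hq1 : ∀ i, p i 1 ≤ 1 := fun i => by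
    rw [hpdef]
    exact ENNReal.toReal_le_of_le_ofReal one_pos.le (by simpa using prob_le_one)
  have hsum3a : (∑ i, p i 1) ≤ 3 * a 1 := by
    -- independence product formula
    have hDmeas : MeasurableSet {x : E | N x ≤ 1} :=
      measurableSet_le hN.1.measurable measurable_const
    have hprod : μ (⋂ i, X i ⁻¹' {x | N x ≤ 1}) = ∏ i, μ (X i ⁻¹' {x | N x ≤ 1}) :=
      hXindep.meas_iInter fun i => ⟨{x | N x ≤ 1}, hDmeas, rfl⟩
    have hcompl : (⋂ i, X i ⁻¹' {x : E | N x ≤ 1}) = (⋃ i, {ω | 1 < N (X i ω)})ᶜ := by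
      ext ω
      simp [not_lt]
    have hmeas_i : ∀ i : Fin n, MeasurableSet {ω | 1 < N (X i ω)} := fun i =>
      measurableSet_lt measurable_const (hN.1.measurable.comp (hXmeas i))
    have hmeasU : MeasurableSet (⋃ i, {ω | 1 < N (X i ω)}) := MeasurableSet.iUnion hmeas_i
    have hcompl_i : ∀ i : Fin n, X i ⁻¹' {x : E | N x ≤ 1} = {ω | 1 < N (X i ω)}ᶜ := by
      intro i; ext ω; simp [not_lt]
    -- real form: 1 - M 1 = ∏ (1 - p i 1)
    have hreal : 1 - M 1 = ∏ i, (1 - p i 1) := by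
      have h1 : μ ((⋃ i, {ω | 1 < N (X i ω)})ᶜ) = 1 - μ (⋃ i, {ω | 1 < N (X i ω)}) :=
        prob_compl_eq_one_sub hmeasU
      have h2 : ∀ i : Fin n, μ ({ω | 1 < N (X i ω)}ᶜ) = 1 - μ {ω | 1 < N (X i ω)} :=
        fun i => prob_compl_eq_one_sub (hmeas_i i)
      have h3 := hprod
      rw [hcompl, h1] at h3
      conv at h3 => rw [Finset.prod_congr rfl fun i _ => by rw [hcompl_i i, h2 i]]
      have h4 := congrArg ENNReal.toReal h3
      rw [ENNReal.toReal_sub_of_le prob_le_one ENNReal.one_ne_top, ENNReal.toReal_one,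
        ENNReal.toReal_prod] at h4
      rw [h4]
      exact Finset.prod_congr rfl fun i _ => by
        rw [ENNReal.toReal_sub_of_le prob_le_one ENNReal.one_ne_top, ENNReal.toReal_one]
    have hM1 : M 1 ≤ 2 * a 1 := hM2a 1
    have hM1nonneg : 0 ≤ M 1 := ENNReal.toReal_nonneg
    have hM1le : M 1 ≤ 1 / 48 := by linarith [ha1small]
    have hd : (47:ℝ) / 48 ≤ 1 - M 1 := by linarith
    have hdpos : (0:ℝ) < 1 - M 1 := by linarith
    -- ∏ (1 - p i 1) ≤ exp (- ∑ p i 1)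
    have hexp : (∏ i, (1 - p i 1)) ≤ Real.exp (-(∑ i, p i 1)) := by
      have : Real.exp (-(∑ i, p i 1)) = ∏ i, Real.exp (-(p i 1)) := by
        rw [← Real.exp_sum]
        congr 1
        rw [← Finset.sum_neg_distrib]
      rw [this]
      refine Finset.prod_le_prod (fun i _ => by linarith [hq1 i]) fun i _ => ?_
      have := Real.add_one_le_exp (-(p i 1))
      linarith
    have hlog : (∑ i, p i 1) ≤ (1 - M 1)⁻¹ - 1 := by
      have h5 : 1 - M 1 ≤ Real.exp (-(∑ i, p i 1)) := by
        rw [hreal]; exact hexp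
      have h6 : Real.log (1 - M 1) ≤ -(∑ i, p i 1) := by
        have := Real.log_le_log hdpos h5
        rwa [Real.log_exp] at this
      have h7 : (∑ i, p i 1) ≤ Real.log (1 - M 1)⁻¹ := by
        rw [Real.log_inv]; linarith
      have h8 : Real.log (1 - M 1)⁻¹ ≤ (1 - M 1)⁻¹ - 1 :=
        Real.log_le_sub_one_of_pos (inv_pos.mpr hdpos)
      linarith
    -- (1 - M1)⁻¹ - 1 = M1 * (1 - M1)⁻¹ ≤ M1 * (48/47) ≤ 3 * a1
    have hinv_le : (1 - M 1)⁻¹ ≤ 48 / 47 := by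
      rw [inv_le_comm₀ hdpos (by norm_num)]
      linarith
    have hident : (1 - M 1)⁻¹ - 1 = M 1 * (1 - M 1)⁻¹ := by
      field_simp
      ring
    have : (∑ i, p i 1) ≤ M 1 * (48 / 47) := by
      rw [hident] at hlog
      calc (∑ i, p i 1) ≤ M 1 * (1 - M 1)⁻¹ := hlog
        _ ≤ M 1 * (48 / 47) := mul_le_mul_of_nonneg_left hinv_le hM1nonneg
    calc (∑ i, p i 1) ≤ M 1 * (48 / 47) := this
      _ ≤ (2 * a 1) * (48 / 47) := by
          exact mul_le_mul_of_nonneg_right hM1 (by norm_num)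
      _ ≤ 3 * a 1 := by nlinarith [hanonneg 1]
  -- each X i satisfies the hypothesis of its weak Borell property
  have hWBi : ∀ i, ∀ t : ℝ, 1 ≤ t → p i t ≤ C * t ^ (-δ) * p i 1 := by
    intro i t ht
    have hhyp : μ {ω | 1 < N (X i ω)} < ENNReal.ofReal θ := by
      have h1 : μ {ω | 1 < N (X i ω)} ≤ 2 * A 1 := by
        have := WBTensorAux.subset_sum hN hXmeas hXindep hXsymm ({i} : Finset (Fin n)) 1
        simpa using this
      have h2 : 2 * A 1 < 2 * ENNReal.ofReal (θ / 2) := by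
        refine (ENNReal.mul_lt_mul_iff_right (by norm_num) (by norm_num)).mpr ?_
        calc A 1 < ENNReal.ofReal (min (θ / 2) (96 * C * (9:ℝ) ^ δ)⁻¹) := hsmall'
          _ ≤ ENNReal.ofReal (θ / 2) := ENNReal.ofReal_le_ofReal (min_le_left _ _)
      have h3 : 2 * ENNReal.ofReal (θ / 2) = ENNReal.ofReal θ := by
        rw [← ENNReal.ofReal_ofNat, ← ENNReal.ofReal_mul (by norm_num)]
        congr 1; ring
      calc μ {ω | 1 < N (X i ω)} ≤ 2 * A 1 := h1
        _ < 2 * ENNReal.ofReal (θ / 2) := h2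
        _ = ENNReal.ofReal θ := h3
    have h := hWB i N hN hhyp t ht
    have hfin : ENNReal.ofReal (C * t ^ (-δ)) * μ {ω | 1 < N (X i ω)} ≠ ⊤ :=
      ENNReal.mul_ne_top ENNReal.ofReal_ne_top (hpne i 1)
    have h2 := ENNReal.toReal_le_toReal (hpne i t) hfin |>.mpr h
    rwa [ENNReal.toReal_mul, ENNReal.toReal_ofReal (by positivity)] at h2
  -- the recursion
  have hrec : ∀ t : ℝ, 1 ≤ t → a (3 * t) ≤ C * t ^ (-δ) * (3 * a 1) + 4 * (a t) ^ 2 := by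
    intro t ht
    have htpos : (0:ℝ) < t := lt_of_lt_of_le one_pos ht
    have h := WBTensorAux.hj hN hXmeas hXindep hXsymm htpos
    have hfin : μ (⋃ i, {ω | t < N (X i ω)})
        + (2 * A t) * (2 * A t) ≠ ⊤ := by
      refine ENNReal.add_ne_top.mpr ⟨hMne t, ?_⟩
      exact ENNReal.mul_ne_top (ENNReal.mul_ne_top (by norm_num) (hAne t))
        (ENNReal.mul_ne_top (by norm_num) (hAne t))
    have h2 := ENNReal.toReal_le_toReal (hAne (3 * t)) hfin |>.mpr h
    rw [ENNReal.toReal_add (hMne t) (by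
        exact ENNReal.mul_ne_top (ENNReal.mul_ne_top (by norm_num) (hAne t))
          (ENNReal.mul_ne_top (by norm_num) (hAne t)))] at h2
    simp only [ENNReal.toReal_mul, ENNReal.toReal_ofNat] at h2
    have hMt : M t ≤ C * t ^ (-δ) * (3 * a 1) := by
      have h3 : M t ≤ ∑ i, p i t := hMsum t
      have h4 : (∑ i, p i t) ≤ ∑ i, C * t ^ (-δ) * p i 1 :=
        Finset.sum_le_sum fun i _ => hWBi i t ht
      have h5 : (∑ i, C * t ^ (-δ) * p i 1) = C * t ^ (-δ) * ∑ i, p i 1 := by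
        rw [Finset.mul_sum]
      have h6 : C * t ^ (-δ) * (∑ i, p i 1) ≤ C * t ^ (-δ) * (3 * a 1) := by
        refine mul_le_mul_of_nonneg_left hsum3a (by positivity)
      linarith
    have : a (3 * t) ≤ M t + (2 * a t) * (2 * a t) := h2
    have hsq : (2 * a t) * (2 * a t) = 4 * (a t) ^ 2 := by ring
    linarith
  -- the induction over powers of 3
  have hK : ∀ k : ℕ, a ((3:ℝ) ^ k) ≤ 4 * C * (3:ℝ) ^ δ * ((3:ℝ) ^ k) ^ (-δ) * a 1 := by
    intro k
    induction k with
    | zero =>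
      simp only [pow_zero, Real.one_rpow, mul_one]
      have h14 : (1:ℝ) ≤ 4 * C * (3:ℝ) ^ δ := by nlinarith
      nlinarith [hanonneg 1]
    | succ k ih =>
      have h3k1 : (1:ℝ) ≤ (3:ℝ) ^ k := one_le_pow₀ (by norm_num)
      have h3kpos : (0:ℝ) < (3:ℝ) ^ k := lt_of_lt_of_le one_pos h3k1
      have hstep := hrec ((3:ℝ) ^ k) h3k1
      have heq : (3:ℝ) ^ (k + 1) = 3 * (3:ℝ) ^ k := by ring
      rw [heq]
      set u : ℝ := ((3:ℝ) ^ k) ^ (-δ) with hudef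
      have hu1 : u ≤ 1 := by
        rw [hudef]
        calc ((3:ℝ) ^ k) ^ (-δ) ≤ ((1:ℝ)) ^ (-δ) := by
              apply Real.rpow_le_rpow_of_nonpos one_pos h3k1 (neg_nonpos.mpr hδ.le)
          _ = 1 := Real.one_rpow _
      have hupos : 0 < u := Real.rpow_pos_of_pos h3kpos _
      have hunext : (3 * (3:ℝ) ^ k) ^ (-δ) = (3:ℝ) ^ (-δ) * u := by
        rw [hudef, ← Real.mul_rpow (by norm_num) h3kpos.le]
      have hinvpow : (3:ℝ) ^ δ * (3:ℝ) ^ (-δ) = 1 := by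
        rw [← Real.rpow_add (by norm_num)]
        simp
      -- combine
      have hak : a ((3:ℝ) ^ k) ≤ 4 * C * (3:ℝ) ^ δ * u * a 1 := ih
      have haknn : 0 ≤ a ((3:ℝ) ^ k) := hanonneg _
      have hsq : (a ((3:ℝ) ^ k)) ^ 2 ≤ (4 * C * (3:ℝ) ^ δ * u * a 1) ^ 2 := by
        exact pow_le_pow_left₀ haknn hak 2
      have hgoal : C * ((3:ℝ) ^ k) ^ (-δ) * (3 * a 1) + 4 * (4 * C * (3:ℝ) ^ δ * u * a 1) ^ 2
          ≤ 4 * C * (3:ℝ) ^ δ * ((3:ℝ) ^ (-δ) * u) * a 1 := by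
        have key : 4 * (4 * C * (3:ℝ) ^ δ * u * a 1) ^ 2 ≤ C * u * a 1 := by
          have e1 : 4 * (4 * C * (3:ℝ) ^ δ * u * a 1) ^ 2
              = (C * u * a 1) * (64 * C * ((3:ℝ) ^ δ * (3:ℝ) ^ δ) * u * a 1) := by ring
          have e2 : (3:ℝ) ^ δ * (3:ℝ) ^ δ = (9:ℝ) ^ δ := by
            rw [← Real.mul_rpow (by norm_num) (by norm_num)]
            norm_num
          rw [e1, e2]
          have e3 : 64 * C * (9:ℝ) ^ δ * u * a 1 ≤ 1 := by
            have hm1 : 64 * C * (9:ℝ) ^ δ * u ≤ 64 * C * (9:ℝ) ^ δ :=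
              mul_le_of_le_one_right (by positivity) hu1
            have hm2 : 64 * C * (9:ℝ) ^ δ * u * a 1 ≤ 64 * C * (9:ℝ) ^ δ * a 1 :=
              mul_le_mul_of_nonneg_right hm1 (hanonneg 1)
            nlinarith [ha196]
          have hcua : (0:ℝ) ≤ C * u * a 1 := by positivity
          nlinarith [e3, hcua]
        have e4 : 4 * C * (3:ℝ) ^ δ * ((3:ℝ) ^ (-δ) * u) * a 1 = 4 * (C * u * a 1) := by
          have : 4 * C * (3:ℝ) ^ δ * ((3:ℝ) ^ (-δ) * u) * a 1
              = 4 * C * ((3:ℝ) ^ δ * (3:ℝ) ^ (-δ)) * u * a 1 := by ring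
          rw [this, hinvpow]; ring
        rw [e4]
        have e5 : C * ((3:ℝ) ^ k) ^ (-δ) * (3 * a 1) = 3 * (C * u * a 1) := by
          rw [hudef]; ring
        rw [e5]
        linarith
      calc a (3 * (3:ℝ) ^ k) ≤ C * ((3:ℝ) ^ k) ^ (-δ) * (3 * a 1) + 4 * (a ((3:ℝ) ^ k)) ^ 2 :=
            hstep
        _ ≤ C * ((3:ℝ) ^ k) ^ (-δ) * (3 * a 1) + 4 * (4 * C * (3:ℝ) ^ δ * u * a 1) ^ 2 := by
            linarith
        _ ≤ 4 * C * (3:ℝ) ^ δ * ((3:ℝ) ^ (-δ) * u) * a 1 := hgoal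
        _ = 4 * C * (3:ℝ) ^ δ * ((3 * (3:ℝ) ^ k) ^ (-δ)) * a 1 := by rw [hunext]
  -- final step: choose k with 3^k ≤ lam < 3^(k+1)
  have hlampos : (0:ℝ) < lam := lt_of_lt_of_le one_pos hlam
  set k : ℕ := ⌊Real.logb 3 lam⌋₊ with hkdef
  have hlogb_nonneg : 0 ≤ Real.logb 3 lam := Real.logb_nonneg (by norm_num) hlam
  have hlameq : (3:ℝ) ^ (Real.logb 3 lam) = lam :=
    Real.rpow_logb (by norm_num) (by norm_num) hlampos
  have h3k_le : (3:ℝ) ^ k ≤ lam := by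
    rw [← hlameq, ← Real.rpow_natCast 3 k]
    exact Real.rpow_le_rpow_left_iff (by norm_num) |>.mpr (Nat.floor_le hlogb_nonneg)
  have hlam_lt : lam < (3:ℝ) ^ (k + 1) := by
    rw [← hlameq, ← Real.rpow_natCast 3 (k + 1)]
    refine Real.rpow_lt_rpow_left_iff (by norm_num) |>.mpr ?_
    push_cast
    exact Nat.lt_floor_add_one _
  have halam : a lam ≤ a ((3:ℝ) ^ k) := hamono _ _ h3k_le
  have hrpow_bound : ((3:ℝ) ^ k) ^ (-δ) ≤ (3:ℝ) ^ δ * lam ^ (-δ) := by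
    have h3kpos : (0:ℝ) < (3:ℝ) ^ k := by positivity
    have hbpos : (0:ℝ) < ((3:ℝ) ^ k) ^ δ := Real.rpow_pos_of_pos h3kpos _
    have hlpos : (0:ℝ) < lam ^ δ := Real.rpow_pos_of_pos hlampos _
    have h1 : lam ≤ 3 * (3:ℝ) ^ k := by
      have h2 : (3:ℝ) ^ (k + 1) = 3 * (3:ℝ) ^ k := by ring
      linarith [hlam_lt]
    have hbd : lam ^ δ ≤ (3:ℝ) ^ δ * ((3:ℝ) ^ k) ^ δ := by
      calc lam ^ δ ≤ (3 * (3:ℝ) ^ k) ^ δ := Real.rpow_le_rpow hlampos.le h1 hδ.le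
        _ = (3:ℝ) ^ δ * ((3:ℝ) ^ k) ^ δ := Real.mul_rpow (by norm_num) h3kpos.le
    rw [Real.rpow_neg h3kpos.le, Real.rpow_neg hlampos.le]
    have key : (((3:ℝ) ^ k) ^ δ)⁻¹ * (lam ^ δ) ≤ (3:ℝ) ^ δ := by
      have h5 := mul_le_mul_of_nonneg_left hbd (le_of_lt (inv_pos.mpr hbpos))
      have h6 : (((3:ℝ) ^ k) ^ δ)⁻¹ * ((3:ℝ) ^ δ * ((3:ℝ) ^ k) ^ δ) = (3:ℝ) ^ δ := by
        field_simp
      linarith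
    calc (((3:ℝ) ^ k) ^ δ)⁻¹
        = ((((3:ℝ) ^ k) ^ δ)⁻¹ * lam ^ δ) * (lam ^ δ)⁻¹ := by field_simp
      _ ≤ (3:ℝ) ^ δ * (lam ^ δ)⁻¹ := mul_le_mul_of_nonneg_right key (by positivity)
  -- conclude
  have hlamneg_nonneg : (0:ℝ) ≤ lam ^ (-δ) := Real.rpow_nonneg hlampos.le _
  have hab : a lam ≤ 12 * (9:ℝ) ^ δ * C * lam ^ (-δ) * a 1 := by
    have h1 : a lam ≤ 4 * C * (3:ℝ) ^ δ * (((3:ℝ) ^ k) ^ (-δ)) * a 1 :=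
      le_trans halam (hK k)
    have h2 : 4 * C * (3:ℝ) ^ δ * (((3:ℝ) ^ k) ^ (-δ)) * a 1
        ≤ 4 * C * (3:ℝ) ^ δ * ((3:ℝ) ^ δ * lam ^ (-δ)) * a 1 := by
      refine mul_le_mul_of_nonneg_right ?_ (hanonneg 1)
      exact mul_le_mul_of_nonneg_left hrpow_bound (by positivity)
    have e2 : (3:ℝ) ^ δ * (3:ℝ) ^ δ = (9:ℝ) ^ δ := by
      rw [← Real.mul_rpow (by norm_num) (by norm_num)]
      norm_num
    have h3 : 4 * C * (3:ℝ) ^ δ * ((3:ℝ) ^ δ * lam ^ (-δ)) * a 1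
        = 4 * (9:ℝ) ^ δ * C * lam ^ (-δ) * a 1 := by
      rw [show 4 * C * (3:ℝ) ^ δ * ((3:ℝ) ^ δ * lam ^ (-δ)) * a 1
          = 4 * C * ((3:ℝ) ^ δ * (3:ℝ) ^ δ) * lam ^ (-δ) * a 1 by ring, e2]
      ring
    have h4 : 4 * (9:ℝ) ^ δ * C * lam ^ (-δ) * a 1
        ≤ 12 * (9:ℝ) ^ δ * C * lam ^ (-δ) * a 1 := by
      nlinarith [hanonneg 1, h9pos, hCpos, hlamneg_nonneg,
        mul_nonneg (mul_nonneg (mul_nonneg h9pos.le hCpos.le) hlamneg_nonneg) (hanonneg 1)]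
    linarith
  calc μ {ω | lam < N (∑ i, X i ω)} = ENNReal.ofReal (a lam) :=
        (ENNReal.ofReal_toReal (hAne lam)).symm
    _ ≤ ENNReal.ofReal (12 * (9:ℝ) ^ δ * C * lam ^ (-δ) * a 1) :=
        ENNReal.ofReal_le_ofReal hab
    _ = ENNReal.ofReal (12 * (9:ℝ) ^ δ * C * lam ^ (-δ)) * ENNReal.ofReal (a 1) :=
        ENNReal.ofReal_mul (by positivity)
    _ = ENNReal.ofReal (12 * (9:ℝ) ^ δ * C * lam ^ (-δ)) * A 1 := by
        rw [ENNReal.ofReal_toReal (hAne 1)]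
end
end

section
/- Let X_1,…,X_n and Y_1,…,Y_n be independent symmetric random vectors with values in a real separable Banach space E such that X_i is (1,1)-dominated by Y_i for each i = 1,…,n. Let φ: Eⁿ → [0,∞) be a continuous function that is convex with respect to each coordinate separately. Then for every t ≥ 0, P( E_ε φ(ε₁X_1,…,ε_nX_n) > t ) ≤ P( E_ε φ(ε₁Y_1,…,ε_nY_n) > t ), where ε₁,…,ε_n are independent Rademacher signs (each uniform on {−1,1}) independent of the X_i and Y_i, and E_ε denotes expectation over the signs only. -/
open MeasureTheory ProbabilityTheory
open scoped ENNReal BigOperators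

noncomputable section

/-- `X` is `(κ, λ)`-dominated by `Y`: for every continuous norm `N` on `E`,
`P(N(X) > 1) ≤ κ P(λ N(Y) > 1)`. -/
def Dominated {Ω E : Type*} [MeasurableSpace Ω] [NormedAddCommGroup E] [NormedSpace ℝ E]
    (μ : Measure Ω) (κ lam : ℝ) (X Y : Ω → E) : Prop :=
  ∀ N : E → ℝ, IsContNorm N →
    μ {ω | 1 < N (X ω)} ≤ ENNReal.ofReal κ * μ {ω | 1 < lam * N (Y ω)}

/-- The sign vector `(±1)ⁿ` encoded by a Boolean vector; a uniform random `s` gives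
independent Rademacher signs. -/
def signs {n : ℕ} (s : Fin n → Bool) (i : Fin n) : ℝ := if s i then 1 else -1

section Aux
variable {E : Type*} [NormedAddCommGroup E] [NormedSpace ℝ E]

lemma isContNorm_aux {M : ℕ} (f : Fin M → E →L[ℝ] ℝ) {ε : ℝ} (hε : 0 < ε) :
    IsContNorm (fun z : E => ‖(fun k : Fin M => f k z)‖ + ε * ‖z‖) := by
  refine ⟨?_, ?_, ?_, ?_⟩
  · exact (continuous_norm.comp (continuous_pi fun k => (f k).continuous)).add
      (continuous_const.mul continuous_norm)
  · intro x y
    simp only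
    have h1 : (fun k : Fin M => f k (x + y))
        = (fun k : Fin M => f k x) + (fun k : Fin M => f k y) := by
      funext k; simp
    rw [h1]
    have h2 := norm_add_le (fun k : Fin M => f k x) (fun k : Fin M => f k y)
    have h3 : ‖x + y‖ ≤ ‖x‖ + ‖y‖ := norm_add_le x y
    nlinarith [hε.le]
  · intro c x
    simp only
    have h1 : (fun k : Fin M => f k (c • x)) = c • (fun k : Fin M => f k x) := by
      funext k; simp
    rw [h1, norm_smul, norm_smul, Real.norm_eq_abs]
    ring
  · intro x hx
    simp only at hx
    have h0 : (0:ℝ) ≤ ‖(fun k : Fin M => f k x)‖ := norm_nonneg _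
    have h1 : (0:ℝ) ≤ ε * ‖x‖ := mul_nonneg hε.le (norm_nonneg _)
    have h2 : ε * ‖x‖ = 0 := by linarith
    have h3 : ‖x‖ = 0 := by
      rcases mul_eq_zero.1 h2 with h | h
      · exact absurd h hε.ne'
      · exact h
    exact norm_eq_zero.1 h3

end Aux

section KeyLemma
variable {E : Type*} [NormedAddCommGroup E] [NormedSpace ℝ E]
  [CompleteSpace E] [TopologicalSpace.SeparableSpace E] [MeasurableSpace E] [BorelSpace E]

lemma measure_gt_convex_compare
    (m ν : Measure E) [IsProbabilityMeasure m] [IsProbabilityMeasure ν]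
    (hdom : ∀ N : E → ℝ, IsContNorm N → m {x | 1 < N x} ≤ ν {x | 1 < N x})
    (g : E → ℝ) (hgc : Continuous g) (hconv : ConvexOn ℝ Set.univ g)
    (hsym : ∀ x, g (-x) = g x) (t : ℝ) :
    m {x | t < g x} ≤ ν {x | t < g x} := by
  classical
  set C : Set E := {x | g x ≤ t} with hCdef
  have hCclosed : IsClosed C := isClosed_le hgc continuous_const
  have hCconv : Convex ℝ C := by
    have h := hconv.convex_le t
    simpa [hCdef, Set.sep_univ] using h
  have hset : {x | t < g x} = Cᶜ := by
    ext x; simp [hCdef, not_le]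
  rw [hset]
  have hCsymm : ∀ y, y ∈ C → -y ∈ C := by
    intro y hy
    simpa [hCdef, hsym] using hy
  by_cases hCe : C = ∅
  · have huniv : Cᶜ = Set.univ := by simp [hCe]
    rw [huniv]
    simp
  obtain ⟨x0, hx0⟩ := Set.nonempty_iff_ne_empty.2 hCe
  have h0C : (0 : E) ∈ C := by
    have h := hconv.2 (Set.mem_univ x0) (Set.mem_univ (-x0))
      (by norm_num : (0:ℝ) ≤ 1/2) (by norm_num : (0:ℝ) ≤ 1/2) (by norm_num)
    have hz : (1/2 : ℝ) • x0 + (1/2 : ℝ) • (-x0) = 0 := by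
      rw [smul_neg]; exact add_neg_cancel _
    rw [hz, hsym x0] at h
    have hgx0 : g x0 ≤ t := hx0
    have hgle : g 0 ≤ g x0 := by
      have h' : g 0 ≤ 1/2 * g x0 + 1/2 * g x0 := by simpa [smul_eq_mul] using h
      linarith
    exact le_trans hgle hgx0
  -- separation at each point of the complement
  have hsep : ∀ p : ↥(Cᶜ), ∃ (f : E →L[ℝ] ℝ) (c : ℝ),
      0 ≤ c ∧ c < 1 ∧ (∀ y ∈ C, |f y| ≤ c) ∧ 1 < f ↑p := by
    rintro ⟨p, hp⟩
    obtain ⟨f, u, hfu, hup⟩ := geometric_hahn_banach_closed_point hCconv hCclosed hp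
    have hu : 0 < u := by simpa using hfu 0 h0C
    set b := f p with hb
    have hub : u < b := hup
    have hub0 : 0 < u + b := by linarith
    have hpos : (0:ℝ) < 2 / (u + b) := by positivity
    refine ⟨(2 / (u + b)) • f, 2 * u / (u + b), by positivity, ?_, ?_, ?_⟩
    · rw [div_lt_one hub0]; linarith
    · intro y hy
      have h1 : f y < u := hfu y hy
      have h2 : -f y < u := by
        have := hfu (-y) (hCsymm y hy)
        simpa using this
      have habs : |f y| ≤ u := abs_le.2 ⟨by linarith, h1.le⟩
      have heq : |((2/(u+b)) • f) y| = (2/(u+b)) * |f y| := by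
        simp [abs_mul, abs_of_pos hpos]
      rw [heq]
      calc (2/(u+b)) * |f y| ≤ (2/(u+b)) * u := by
            exact mul_le_mul_of_nonneg_left habs hpos.le
        _ = 2 * u / (u+b) := by ring
    · have happ : ((2/(u+b)) • f) p = 2/(u+b) * b := by
        rw [ContinuousLinearMap.smul_apply, smul_eq_mul, ← hb]
      rw [happ, div_mul_eq_mul_div, lt_div_iff₀ hub0]
      nlinarith
  choose F cc hc0 hc1 hcC hFp using hsep
  refine ENNReal.le_of_forall_pos_le_add fun ε hε _ => ?_
  -- choose a radius with small ν-tail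
  have htail : ∃ R : ℕ, ν {y : E | (R:ℝ) < ‖y‖} < (ε : ℝ≥0∞) := by
    have hA : ∀ j : ℕ, MeasurableSet {y : E | (j:ℝ) < ‖y‖} := fun j =>
      (isOpen_lt continuous_const continuous_norm).measurableSet
    have hanti : Antitone (fun j : ℕ => {y : E | (j:ℝ) < ‖y‖}) := by
      intro a b hab y hy
      have hcast : (a:ℝ) ≤ (b:ℝ) := by exact_mod_cast hab
      simp only [Set.mem_setOf_eq] at hy ⊢
      exact lt_of_le_of_lt hcast hy
    have hempty : ⋂ j : ℕ, {y : E | (j:ℝ) < ‖y‖} = ∅ := by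
      ext y
      simp only [Set.mem_iInter, Set.mem_setOf_eq, Set.mem_empty_iff_false, iff_false, not_forall,
        not_lt]
      exact exists_nat_ge ‖y‖
    have hlim := MeasureTheory.tendsto_measure_iInter_atTop (μ := ν)
      (fun j => (hA j).nullMeasurableSet) hanti ⟨0, measure_ne_top ν _⟩
    rw [hempty] at hlim
    simp only [measure_empty] at hlim
    have hev := hlim.eventually_lt_const (show (0:ℝ≥0∞) < (ε:ℝ≥0∞) by exact_mod_cast hε)
    exact hev.exists
  obtain ⟨R, hR⟩ := htail
  -- Lindelöf: countable subcover of the complement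
  set U : ↥(Cᶜ) → Set E := fun p => {z | 1 < F p z} with hUdef
  have hUopen : ∀ p, IsOpen (U p) := fun p => isOpen_lt continuous_const (F p).continuous
  obtain ⟨T, hTc, hTU⟩ := TopologicalSpace.isOpen_iUnion_countable U hUopen
  have hcov : Cᶜ ⊆ ⋃ p, U p := fun z hz => Set.mem_iUnion.2 ⟨⟨z, hz⟩, hFp ⟨z, hz⟩⟩
  by_cases hT : T.Nonempty
  · obtain ⟨e, hTe⟩ := hTc.exists_eq_range hT
    have hcov2 : Cᶜ ⊆ ⋃ j : ℕ, U (e j) := by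
      intro z hz
      have h1 : z ∈ ⋃ p ∈ T, U p := by rw [hTU]; exact hcov hz
      rw [hTe] at h1
      simp only [Set.mem_iUnion] at h1 ⊢
      obtain ⟨p, ⟨j, rfl⟩, hzp⟩ := h1
      exact ⟨j, hzp⟩
    set s : ℕ → Set E := fun M => ⋃ j ∈ Finset.range M, U (e j) with hsdef
    have hmono : Monotone s := by
      intro a b hab
      exact Set.biUnion_subset_biUnion_left (fun j hj =>
        Finset.mem_range.2 (lt_of_lt_of_le (Finset.mem_range.1 hj) hab))
    have hUnion : ⋃ M, s M = ⋃ j : ℕ, U (e j) := by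
      ext z
      simp only [hsdef, Set.mem_iUnion, Finset.mem_range]
      constructor
      · rintro ⟨M, j, _, hz⟩; exact ⟨j, hz⟩
      · rintro ⟨j, hz⟩; exact ⟨j+1, j, Nat.lt_succ_self j, hz⟩
    have htend := MeasureTheory.tendsto_measure_iUnion_atTop (μ := m) hmono
    -- per-M bound
    have hbound : ∀ M : ℕ, m (s M) ≤ ν Cᶜ + (ε : ℝ≥0∞) := by
      intro M
      match M with
      | 0 => simp [hsdef]
      | (M+1) =>
        set c : ℝ := Finset.univ.sup' Finset.univ_nonempty
          (fun k : Fin (M+1) => cc (e (k : ℕ))) with hcdef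
        have hc1' : c < 1 := by
          rw [hcdef, Finset.sup'_lt_iff]
          intro k _
          exact hc1 (e (k : ℕ))
        have hc0' : 0 ≤ c :=
          le_trans (hc0 (e ((0 : Fin (M+1)) : ℕ)))
            (Finset.le_sup' (fun k : Fin (M+1) => cc (e (k : ℕ)))
              (Finset.mem_univ (0 : Fin (M+1))))
        set ε' : ℝ := (1 - c) / (R + 1) with hε'def
        have h1c : 0 < 1 - c := by linarith
        have hε' : 0 < ε' := by positivity
        set N : E → ℝ := fun z => ‖(fun k : Fin (M+1) => F (e (k : ℕ)) z)‖ + ε' * ‖z‖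
          with hNdef
        have hN : IsContNorm N := isContNorm_aux (fun k : Fin (M+1) => F (e (k : ℕ))) hε'
        have hsub1 : s (M+1) ⊆ {z | 1 < N z} := by
          intro z hz
          simp only [hsdef, Set.mem_iUnion, Finset.mem_range] at hz
          obtain ⟨j, hj, hzU⟩ := hz
          have h1 : 1 < F (e j) z := hzU
          set k : Fin (M+1) := ⟨j, hj⟩ with hk
          have h2 : F (e j) z ≤ ‖(fun k : Fin (M+1) => F (e (k : ℕ)) z)‖ := by
            have := norm_le_pi_norm (fun k : Fin (M+1) => F (e (k : ℕ)) z) k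
            rw [Real.norm_eq_abs] at this
            exact le_trans (le_abs_self _) this
          have h3 : 0 ≤ ε' * ‖z‖ := mul_nonneg hε'.le (norm_nonneg _)
          show 1 < N z
          rw [hNdef]
          simp only
          linarith
        have hsub2 : {z | 1 < N z} ⊆ Cᶜ ∪ {y : E | (R:ℝ) < ‖y‖} := by
          intro z hz
          by_contra hcon
          simp only [Set.mem_union, Set.mem_compl_iff, not_or, not_not, Set.mem_setOf_eq,
            not_lt] at hcon
          obtain ⟨hzC, hzR⟩ := hcon
          have hvec : ‖(fun k : Fin (M+1) => F (e (k : ℕ)) z)‖ ≤ c := by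
            rw [pi_norm_le_iff_of_nonneg hc0']
            intro k
            rw [Real.norm_eq_abs]
            exact le_trans (hcC (e (k : ℕ)) z hzC)
              (Finset.le_sup' (fun k : Fin (M+1) => cc (e (k : ℕ))) (Finset.mem_univ k))
          have hterm : ε' * ‖z‖ ≤ ε' * R := mul_le_mul_of_nonneg_left hzR hε'.le
          have hε'R : ε' * (R + 1) = 1 - c := by
            rw [hε'def]; field_simp
          have hNz : N z < 1 := by
            rw [hNdef]; simp only
            nlinarith [hε'.le]
          exact absurd hz (by simp only [Set.mem_setOf_eq, not_lt]; exact hNz.le)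
        calc m (s (M+1)) ≤ m {z | 1 < N z} := measure_mono hsub1
          _ ≤ ν {z | 1 < N z} := hdom N hN
          _ ≤ ν (Cᶜ ∪ {y : E | (R:ℝ) < ‖y‖}) := measure_mono hsub2
          _ ≤ ν Cᶜ + ν {y : E | (R:ℝ) < ‖y‖} := measure_union_le _ _
          _ ≤ ν Cᶜ + (ε : ℝ≥0∞) := add_le_add_right hR.le _
    have hfinal : m (⋃ M, s M) ≤ ν Cᶜ + (ε : ℝ≥0∞) := le_of_tendsto' htend hbound
    calc m Cᶜ ≤ m (⋃ M, s M) := measure_mono (by rw [hUnion]; exact hcov2)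
      _ ≤ ν Cᶜ + (ε : ℝ≥0∞) := hfinal
  · -- T empty: the complement is empty
    have hTe : T = ∅ := Set.not_nonempty_iff_eq_empty.1 hT
    have h1 : ⋃ p, U p = ∅ := by
      rw [← hTU, hTe]; simp
    have h2 : Cᶜ ⊆ ∅ := h1 ▸ hcov
    have : m Cᶜ = 0 := measure_mono_null h2 measure_empty
    rw [this]
    exact zero_le

end KeyLemma

section Fav
variable {E : Type*} [NormedAddCommGroup E] [NormedSpace ℝ E] {n : ℕ}

/-- The Rademacher average of `φ`. -/
def Fav (φ : (Fin n → E) → ℝ) (w : Fin n → E) : ℝ :=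
  (∑ s : Fin n → Bool, φ (fun i => signs s i • w i)) / 2 ^ n

lemma Fav_continuous {φ : (Fin n → E) → ℝ} (hφcont : Continuous φ) :
    Continuous (Fav φ) := by
  apply Continuous.div_const
  apply continuous_finset_sum
  intro s _
  exact hφcont.comp (continuous_pi fun i => (continuous_apply i).const_smul (signs s i))

lemma update_smul (a : Fin n → ℝ) (v : Fin n → E) (k : Fin n) (x : E) :
    (fun i => a i • Function.update v k x i) =
      Function.update (fun i => a i • v i) k (a k • x) := by
  funext i
  rcases eq_or_ne i k with rfl | hik
  · simp
  · simp [Function.update_of_ne hik]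

lemma convexOn_finset_sum {ι : Type*} (t : Finset ι) (f : ι → E → ℝ)
    (h : ∀ i ∈ t, ConvexOn ℝ Set.univ (f i)) :
    ConvexOn ℝ Set.univ (fun x => ∑ i ∈ t, f i x) := by
  classical
  induction t using Finset.induction_on with
  | empty => simpa using convexOn_const (0:ℝ) convex_univ
  | @insert a t hnotmem ih =>
    simp_rw [Finset.sum_insert hnotmem]
    exact (h a (Finset.mem_insert_self a t)).add
      (ih fun i hi => h i (Finset.mem_insert_of_mem hi))

lemma Fav_slice_convex {φ : (Fin n → E) → ℝ}
    (hφconv : ∀ (i : Fin n) (v : Fin n → E),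
      ConvexOn ℝ Set.univ (fun x : E => φ (Function.update v i x)))
    (k : Fin n) (v : Fin n → E) :
    ConvexOn ℝ Set.univ (fun x : E => Fav φ (Function.update v k x)) := by
  have hterm : ∀ s : Fin n → Bool, ConvexOn ℝ Set.univ
      (fun x : E => φ (fun i => signs s i • Function.update v k x i)) := by
    intro s
    have h1 := hφconv k (fun i => signs s i • v i)
    have h2 := h1.comp_affineMap ((signs s k • (LinearMap.id : E →ₗ[ℝ] E)).toAffineMap)
    have h3 : (fun x : E => φ (fun i => signs s i • Function.update v k x i)) =
        (fun y : E => φ (Function.update (fun i => signs s i • v i) k y)) ∘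
          (fun x : E => signs s k • x) := by
      funext x
      simp only [Function.comp_apply]
      rw [update_smul]
    rw [h3]
    exact h2
  have hsum := convexOn_finset_sum (Finset.univ : Finset (Fin n → Bool))
    (fun s => fun x : E => φ (fun i => signs s i • Function.update v k x i))
    (fun s _ => hterm s)
  have h4 := hsum.smul (by positivity : (0:ℝ) ≤ ((2:ℝ)^n)⁻¹)
  have h5 : (fun x : E => Fav φ (Function.update v k x)) =
      (fun x : E => ((2:ℝ)^n)⁻¹ •
        ∑ s : Fin n → Bool, φ (fun i => signs s i • Function.update v k x i)) := by
    funext x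
    rw [Fav, smul_eq_mul, div_eq_inv_mul]
  rw [h5]
  exact h4

lemma Fav_slice_symm {φ : (Fin n → E) → ℝ} (k : Fin n) (v : Fin n → E) (x : E) :
    Fav φ (Function.update v k (-x)) = Fav φ (Function.update v k x) := by
  classical
  have hinv : Function.Involutive
      (fun s : Fin n → Bool => Function.update s k (!(s k))) := by
    intro s
    funext i
    rcases eq_or_ne i k with rfl | hik
    · simp
    · simp [Function.update_of_ne hik]
  rw [Fav, Fav]
  congr 1
  refine Fintype.sum_equiv hinv.toPerm _ _ fun s => ?_
  congr 1
  funext i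
  rcases eq_or_ne i k with rfl | hik
  · simp only [Function.Involutive.coe_toPerm, Function.update_self]
    cases h : s i <;> simp [signs, h]
  · simp only [Function.Involutive.coe_toPerm, Function.update_of_ne hik]
    simp [signs, Function.update_of_ne hik]

end Fav

section Swap
variable {E : Type*} [NormedAddCommGroup E] [NormedSpace ℝ E]
  [CompleteSpace E] [TopologicalSpace.SeparableSpace E] [MeasurableSpace E] [BorelSpace E]

lemma pi_swap {n : ℕ} (m m' : Fin (n+1) → Measure E)
    [∀ i, IsProbabilityMeasure (m i)] [∀ i, IsProbabilityMeasure (m' i)]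
    (k : Fin (n+1)) (heq : ∀ i, i ≠ k → m i = m' i)
    (hdomk : ∀ N : E → ℝ, IsContNorm N → m k {x | 1 < N x} ≤ m' k {x | 1 < N x})
    (φ : (Fin (n+1) → E) → ℝ) (hφcont : Continuous φ)
    (hφconv : ∀ (i : Fin (n+1)) (v : Fin (n+1) → E),
      ConvexOn ℝ Set.univ (fun x : E => φ (Function.update v i x)))
    (t : ℝ) :
    Measure.pi m {w | t < Fav φ w} ≤ Measure.pi m' {w | t < Fav φ w} := by
  classical
  set A : Set (Fin (n+1) → E) := {w | t < Fav φ w} with hA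
  have hAmeas : MeasurableSet A :=
    (isOpen_lt continuous_const (Fav_continuous hφcont)).measurableSet
  set e := MeasurableEquiv.piFinSuccAbove (fun _ : Fin (n+1) => E) k with he
  have hrest : (fun j : Fin n => m (k.succAbove j)) = fun j => m' (k.succAbove j) := by
    funext j; exact heq _ (Fin.succAbove_ne k j)
  have hS : MeasurableSet (e.symm ⁻¹' A) := e.symm.measurable hAmeas
  have hpre1 : Measure.pi m A
      = ((m k).prod (Measure.pi fun j => m (k.succAbove j))) (e.symm ⁻¹' A) := by
    have hp := MeasureTheory.measurePreserving_piFinSuccAbove m k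
    rw [← hp.map_eq, Measure.map_apply e.measurable hS]
    congr 1
    ext w
    simp [Set.mem_preimage]
  have hpre2 : Measure.pi m' A
      = ((m' k).prod (Measure.pi fun j => m' (k.succAbove j))) (e.symm ⁻¹' A) := by
    have hp := MeasureTheory.measurePreserving_piFinSuccAbove m' k
    rw [← hp.map_eq, Measure.map_apply e.measurable hS]
    congr 1
    ext w
    simp [Set.mem_preimage]
  rw [hpre1, hpre2, Measure.prod_apply_symm hS, Measure.prod_apply_symm hS, ← hrest]
  refine MeasureTheory.lintegral_mono fun y => ?_
  have h1 : ∀ x : E, e.symm (x, y) = Function.update (e.symm (0, y)) k x := by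
    intro x
    funext j
    rcases eq_or_ne j k with rfl | hjk
    · simp [he, MeasurableEquiv.piFinSuccAbove_symm_apply]
    · obtain ⟨j', rfl⟩ := Fin.exists_succAbove_eq hjk
      simp [he, Function.update_of_ne hjk, MeasurableEquiv.piFinSuccAbove_symm_apply,
        Fin.insertNth_apply_succAbove]
  have hsets : ((fun x => (x, y)) ⁻¹' (e.symm ⁻¹' A))
      = {x : E | t < Fav φ (Function.update (e.symm (0, y)) k x)} := by
    ext x
    simp only [Set.mem_preimage, hA, Set.mem_setOf_eq, h1 x]
  rw [hsets]
  exact measure_gt_convex_compare (m k) (m' k) hdomk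
    (fun x => Fav φ (Function.update (e.symm (0, y)) k x))
    ((Fav_continuous hφcont).comp (continuous_const.update k continuous_id))
    (Fav_slice_convex hφconv k _)
    (fun x => Fav_slice_symm k _ x) t

end Swap

section Main
variable {Ω E : Type*} [MeasurableSpace Ω] [NormedAddCommGroup E] [NormedSpace ℝ E]
  [MeasurableSpace E] [BorelSpace E]

lemma map_eq_pi (μ : Measure Ω) [IsProbabilityMeasure μ] {n : ℕ} (X : Fin n → Ω → E)
    (hXmeas : ∀ i, Measurable (X i))
    (hXindep : iIndepFun X μ) :
    μ.map (fun ω i => X i ω) = Measure.pi (fun i => μ.map (X i)) := by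
  classical
  haveI : ∀ i, IsProbabilityMeasure (μ.map (X i)) :=
    fun i => Measure.isProbabilityMeasure_map (hXmeas i).aemeasurable
  refine (Measure.pi_eq fun s hs => ?_).symm
  rw [Measure.map_apply (measurable_pi_lambda _ hXmeas) (MeasurableSet.univ_pi hs)]
  have hpre : (fun ω i => X i ω) ⁻¹' (Set.univ.pi s) = ⋂ i, X i ⁻¹' s i := by
    ext ω; simp [Set.mem_univ_pi]
  rw [hpre]
  have h := (iIndepFun_iff_measure_inter_preimage_eq_mul.1 hXindep) Finset.univ
    (fun i _ => hs i)
  calc μ (⋂ i, X i ⁻¹' s i) = μ (⋂ i ∈ Finset.univ, X i ⁻¹' s i) := by simp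
    _ = ∏ i, μ (X i ⁻¹' s i) := h
    _ = ∏ i, (μ.map (X i)) (s i) := by
        refine Finset.prod_congr rfl fun i _ => ?_
        rw [Measure.map_apply (hXmeas i) (hs i)]

end Main

theorem conditional_convexity_domination'
    {Ω E : Type*} [MeasurableSpace Ω] [NormedAddCommGroup E] [NormedSpace ℝ E]
    [CompleteSpace E] [TopologicalSpace.SeparableSpace E] [MeasurableSpace E] [BorelSpace E]
    (μ : Measure Ω) [IsProbabilityMeasure μ] (n : ℕ)
    (X Y : Fin n → Ω → E)
    (hXmeas : ∀ i, Measurable (X i)) (hYmeas : ∀ i, Measurable (Y i))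
    (hXindep : iIndepFun X μ)
    (hYindep : iIndepFun Y μ)
    (hdom : ∀ i, ∀ N : E → ℝ, IsContNorm N →
      μ {ω | 1 < N (X i ω)} ≤ μ {ω | 1 < N (Y i ω)})
    (φ : (Fin n → E) → ℝ)
    (hφcont : Continuous φ)
    (hφconv : ∀ (i : Fin n) (v : Fin n → E),
      ConvexOn ℝ Set.univ (fun x : E => φ (Function.update v i x)))
    (t : ℝ) :
    μ {ω | t < (∑ s : Fin n → Bool, φ (fun i => signs s i • X i ω)) / 2 ^ n}
      ≤ μ {ω | t < (∑ s : Fin n → Bool, φ (fun i => signs s i • Y i ω)) / 2 ^ n} := by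
  classical
  set A : Set (Fin n → E) := {w | t < Fav φ w} with hA
  have hAmeas : MeasurableSet A :=
    (isOpen_lt continuous_const (Fav_continuous hφcont)).measurableSet
  haveI hinstX : ∀ i, IsProbabilityMeasure (μ.map (X i)) :=
    fun i => Measure.isProbabilityMeasure_map (hXmeas i).aemeasurable
  haveI hinstY : ∀ i, IsProbabilityMeasure (μ.map (Y i)) :=
    fun i => Measure.isProbabilityMeasure_map (hYmeas i).aemeasurable
  have hXset : μ {ω | t < (∑ s : Fin n → Bool, φ (fun i => signs s i • X i ω)) / 2 ^ n}
      = Measure.pi (fun i => μ.map (X i)) A := by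
    rw [← map_eq_pi μ X hXmeas hXindep,
      Measure.map_apply (measurable_pi_lambda _ hXmeas) hAmeas]
    rfl
  have hYset : μ {ω | t < (∑ s : Fin n → Bool, φ (fun i => signs s i • Y i ω)) / 2 ^ n}
      = Measure.pi (fun i => μ.map (Y i)) A := by
    rw [← map_eq_pi μ Y hYmeas hYindep,
      Measure.map_apply (measurable_pi_lambda _ hYmeas) hAmeas]
    rfl
  rw [hXset, hYset]
  set fam : ℕ → Fin n → Measure E := fun j i =>
    if (i : ℕ) < j then μ.map (Y i) else μ.map (X i) with hfam
  haveI hfaminst : ∀ j i, IsProbabilityMeasure (fam j i) := by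
    intro j i
    rw [hfam]
    dsimp only
    split
    · exact hinstY i
    · exact hinstX i
  have hstep : ∀ j : ℕ, Measure.pi (fam j) A ≤ Measure.pi (fam (j+1)) A := by
    intro j
    by_cases hj : j < n
    · obtain ⟨n', rfl⟩ : ∃ n', n = n' + 1 :=
        ⟨n - 1, (Nat.succ_pred_eq_of_pos (Nat.lt_of_le_of_lt (Nat.zero_le j) hj)).symm⟩
      set k : Fin (n' + 1) := ⟨j, hj⟩ with hk
      refine pi_swap (fam j) (fam (j+1)) k ?_ ?_ φ hφcont hφconv t
      · intro i hik
        rw [hfam]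
        dsimp only
        have hij : (i : ℕ) ≠ j := by
          intro h
          exact hik (Fin.ext (by rw [h, hk]))
        by_cases h : (i : ℕ) < j
        · rw [if_pos h, if_pos (lt_trans h (Nat.lt_succ_self j))]
        · rw [if_neg h, if_neg (fun hc => h (lt_of_le_of_ne (Nat.lt_succ_iff.1 hc) hij))]
      · intro N hN
        have hNmeas : MeasurableSet {x : E | 1 < N x} :=
          (isOpen_lt continuous_const hN.1).measurableSet
        have hkj : fam j k = μ.map (X k) := by
          rw [hfam]; simp [hk]
        have hkj1 : fam (j+1) k = μ.map (Y k) := by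
          rw [hfam]; simp [hk]
        rw [hkj, hkj1, Measure.map_apply (hXmeas k) hNmeas, Measure.map_apply (hYmeas k) hNmeas]
        simpa [Set.preimage_setOf_eq] using hdom k N hN
    · have hfameq : fam j = fam (j+1) := by
        funext i
        rw [hfam]
        dsimp only
        have hi : (i : ℕ) < n := i.2
        have h1 : (i : ℕ) < j := lt_of_lt_of_le hi (not_lt.1 hj)
        rw [if_pos h1, if_pos (lt_trans h1 (Nat.lt_succ_self j))]
      rw [hfameq]
  have hchain : ∀ j : ℕ, Measure.pi (fam 0) A ≤ Measure.pi (fam j) A := by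
    intro j
    induction j with
    | zero => exact le_refl _
    | succ j ih => exact le_trans ih (hstep j)
  have h0 : fam 0 = fun i => μ.map (X i) := by
    funext i; rw [hfam]; simp
  have hn : fam n = fun i => μ.map (Y i) := by
    funext i; rw [hfam]; simp [i.2]
  calc Measure.pi (fun i => μ.map (X i)) A = Measure.pi (fam 0) A := by rw [h0]
    _ ≤ Measure.pi (fam n) A := hchain n
    _ = Measure.pi (fun i => μ.map (Y i)) A := by rw [hn]

/-- **Lemma (conditional convexity).** If `Xᵢ ≺_(1,1) Yᵢ` for independent symmetric random
vectors and `φ : Eⁿ → [0,∞)` is continuous and convex in each coordinate separately, then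
`P(E_ε φ(ε₁X₁, …, εₙXₙ) > t) ≤ P(E_ε φ(ε₁Y₁, …, εₙYₙ) > t)` for all `t ≥ 0`; here the
expectation over independent uniform signs is written as the average over all `2ⁿ` sign
patterns. -/
theorem conditional_convexity_domination
    {Ω E : Type*} [MeasurableSpace Ω] [NormedAddCommGroup E] [NormedSpace ℝ E]
    [CompleteSpace E] [TopologicalSpace.SeparableSpace E] [MeasurableSpace E] [BorelSpace E]
    (μ : Measure Ω) [IsProbabilityMeasure μ] (n : ℕ)
    (X Y : Fin n → Ω → E)
    (hXmeas : ∀ i, Measurable (X i)) (hYmeas : ∀ i, Measurable (Y i))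
    (hXindep : iIndepFun X μ)
    (hYindep : iIndepFun Y μ)
    (hXsymm : ∀ i, IsSymmetricRV μ (X i)) (hYsymm : ∀ i, IsSymmetricRV μ (Y i))
    (hdom : ∀ i, Dominated μ 1 1 (X i) (Y i))
    (φ : (Fin n → E) → ℝ)
    (hφnonneg : ∀ v, 0 ≤ φ v) (hφcont : Continuous φ)
    (hφconv : ∀ (i : Fin n) (v : Fin n → E),
      ConvexOn ℝ Set.univ (fun x : E => φ (Function.update v i x)))
    (t : ℝ) (ht : 0 ≤ t) :
    μ {ω | t < (∑ s : Fin n → Bool, φ (fun i => signs s i • X i ω)) / 2 ^ n}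
      ≤ μ {ω | t < (∑ s : Fin n → Bool, φ (fun i => signs s i • Y i ω)) / 2 ^ n} := by
  have hdom' : ∀ i, ∀ N : E → ℝ, IsContNorm N →
      μ {ω | 1 < N (X i ω)} ≤ μ {ω | 1 < N (Y i ω)} := by
    intro i N hN
    have h := hdom i N hN
    simpa using h
  exact conditional_convexity_domination' μ n X Y hXmeas hYmeas hXindep hYindep hdom' φ
    hφcont hφconv t
end
end

section
/- Let X_1,…,X_n be independent symmetric random vectors in a normed space (E,‖·‖) (E a real separable Banach space with a continuous norm ‖·‖). Then for every 0 < α ≤ 1, E min{ E_ε (‖∑_{i=1}^n ε_i X_i‖ − 1)_+ , 1 } ≥ α P( ‖∑_{i=1}^n X_i‖ > 1 + α ), where ε₁,…,ε_n are independent Rademacher signs (each uniform on {−1,1}) independent of the X_i, E_ε denotes expectation over the signs only, and u_+ = max{u,0}. -/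
open MeasureTheory ProbabilityTheory
open scoped ENNReal BigOperators

noncomputable section

section Aux

variable {Ω E : Type*} [MeasurableSpace Ω] [NormedAddCommGroup E] [NormedSpace ℝ E]
  [MeasurableSpace E] [BorelSpace E] [SecondCountableTopology E]

lemma map_add_of_indep (μ : Measure Ω) [IsProbabilityMeasure μ]
    {U V U' V' : Ω → E} (hU : Measurable U) (hV : Measurable V)
    (hU' : Measurable U') (hV' : Measurable V')
    (hind : IndepFun U V μ) (hind' : IndepFun U' V' μ)
    (h1 : μ.map U = μ.map U') (h2 : μ.map V = μ.map V') :
    μ.map (fun ω => U ω + V ω) = μ.map (fun ω => U' ω + V' ω) := by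
  have hadd : Measurable (fun p : E × E => p.1 + p.2) := measurable_add
  have e1 : μ.map (fun ω => U ω + V ω)
      = (μ.map (fun ω => (U ω, V ω))).map (fun p : E × E => p.1 + p.2) := by
    rw [Measure.map_map hadd (hU.prodMk hV)]; rfl
  have e2 : μ.map (fun ω => U' ω + V' ω)
      = (μ.map (fun ω => (U' ω, V' ω))).map (fun p : E × E => p.1 + p.2) := by
    rw [Measure.map_map hadd (hU'.prodMk hV')]; rfl
  rw [e1, e2,
    (indepFun_iff_map_prod_eq_prod_map_map hU.aemeasurable hV.aemeasurable).1 hind,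
    (indepFun_iff_map_prod_eq_prod_map_map hU'.aemeasurable hV'.aemeasurable).1 hind',
    h1, h2]

lemma map_sum_signs (μ : Measure Ω) [IsProbabilityMeasure μ] {n : ℕ}
    (X : Fin n → Ω → E) (hXmeas : ∀ i, Measurable (X i))
    (hXindep : iIndepFun X μ)
    (hXsymm : ∀ i, IsSymmetricRV μ (X i)) (s : Fin n → Bool) (t : Finset (Fin n)) :
    μ.map (fun ω => ∑ i ∈ t, signs s i • X i ω) = μ.map (fun ω => ∑ i ∈ t, X i ω) := by
  classical
  have hYmeas : ∀ i, Measurable (fun ω => signs s i • X i ω) :=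
    fun i => (hXmeas i).const_smul (signs s i)
  have hYindep : iIndepFun (fun i ω => signs s i • X i ω) μ := by
    exact hXindep.comp (fun i x => signs s i • x)
      (fun i => measurable_const_smul (signs s i))
  have hmap1 : ∀ i, μ.map (fun ω => signs s i • X i ω) = μ.map (X i) := by
    intro i
    by_cases h : s i
    · simp [signs, h]
    · have : (fun ω => signs s i • X i ω) = fun ω => -(X i ω) := by
        funext ω; simp [signs, h]
      rw [this, ← hXsymm i]
  induction t using Finset.induction_on with
  | empty => simp
  | @insert a t ha ih =>
    simp only [Finset.sum_insert ha]
    have hindY : IndepFun (fun ω => signs s a • X a ω)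
        (fun ω => ∑ i ∈ t, signs s i • X i ω) μ := by
      have := (hYindep.indepFun_finsetSum_of_notMem hYmeas ha).symm
      have he : (∑ j ∈ t, fun ω => signs s j • X j ω)
          = fun ω => ∑ i ∈ t, signs s i • X i ω := by
        funext ω; simp
      rwa [he] at this
    have hindX : IndepFun (X a) (fun ω => ∑ i ∈ t, X i ω) μ := by
      have := (hXindep.indepFun_finsetSum_of_notMem hXmeas ha).symm
      have he : (∑ j ∈ t, X j) = fun ω => ∑ i ∈ t, X i ω := by
        funext ω; simp
      rwa [he] at this
    exact map_add_of_indep μ (hYmeas a) (Finset.measurable_sum t fun i _ => hYmeas i)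
      (hXmeas a) (Finset.measurable_sum t fun i _ => hXmeas i)
      hindY hindX (hmap1 a) ih

end Aux

/-- **Lemma (lower bound for the proxy).** For independent symmetric random vectors in a
normed space (with continuous norm `N` on the separable Banach space `E`) and `0 < α ≤ 1`,
`E min{E_ε (N(∑ εᵢXᵢ) − 1)₊, 1} ≥ α P(N(∑ Xᵢ) > 1 + α)`. -/
theorem proxy_lower_bound
    {Ω E : Type*} [MeasurableSpace Ω] [NormedAddCommGroup E] [NormedSpace ℝ E]
    [CompleteSpace E] [TopologicalSpace.SeparableSpace E] [MeasurableSpace E] [BorelSpace E]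
    (μ : Measure Ω) [IsProbabilityMeasure μ] (n : ℕ)
    (X : Fin n → Ω → E) (hXmeas : ∀ i, Measurable (X i))
    (hXindep : iIndepFun X μ)
    (hXsymm : ∀ i, IsSymmetricRV μ (X i))
    (N : E → ℝ) (hN : IsContNorm N)
    (α : ℝ) (hα0 : 0 < α) (hα1 : α ≤ 1) :
    ENNReal.ofReal α * μ {ω | 1 + α < N (∑ i, X i ω)}
      ≤ ∫⁻ ω, ENNReal.ofReal
        (min ((∑ s : Fin n → Bool, max (N (∑ i, signs s i • X i ω) - 1) 0) / 2 ^ n) 1) ∂μ := by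
  classical
  have hNcont : Continuous N := hN.1
  have hNmeas : Measurable N := hNcont.measurable
  set S : Ω → E := fun ω => ∑ i, X i ω with hS
  have hSmeas : Measurable S := Finset.measurable_sum _ fun i _ => hXmeas i
  set Ss : (Fin n → Bool) → Ω → E := fun s ω => ∑ i, signs s i • X i ω with hSs
  have hSsmeas : ∀ s, Measurable (Ss s) :=
    fun s => Finset.measurable_sum _ fun i _ => (hXmeas i).const_smul _
  -- g : value of min (max (N x - 1) 0) 1
  set g : E → ℝ≥0∞ := fun x => ENNReal.ofReal (min (max (N x - 1) 0) 1) with hg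
  have hgmeas : Measurable g :=
    ENNReal.measurable_ofReal.comp (((hNmeas.sub measurable_const).max
      measurable_const).min measurable_const)
  -- the key distributional identity
  have hmap : ∀ s : Fin n → Bool, μ.map (Ss s) = μ.map S := by
    intro s
    exact map_sum_signs μ X hXmeas hXindep hXsymm s Finset.univ
  have hlint : ∀ s : Fin n → Bool, ∫⁻ ω, g (Ss s ω) ∂μ = ∫⁻ ω, g (S ω) ∂μ := by
    intro s
    rw [← lintegral_map hgmeas (hSsmeas s), hmap s, lintegral_map hgmeas hSmeas]
  set I : ℝ≥0∞ := ∫⁻ ω, g (S ω) ∂μ with hI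
  -- Step 1 : lower bound the integrand pointwise
  have hpoint : ∀ ω, (∑ s : Fin n → Bool, g (Ss s ω)) / 2 ^ n
      ≤ ENNReal.ofReal
        (min ((∑ s : Fin n → Bool, max (N (∑ i, signs s i • X i ω) - 1) 0) / 2 ^ n) 1) := by
    intro ω
    set a : (Fin n → Bool) → ℝ := fun s => max (N (Ss s ω) - 1) 0 with ha
    have ha0 : ∀ s, 0 ≤ a s := fun s => le_max_right _ _
    have hb0 : ∀ s, 0 ≤ min (a s) 1 := fun s => le_min (ha0 s) zero_le_one
    have key : (∑ s : Fin n → Bool, min (a s) 1) / 2 ^ n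
        ≤ min ((∑ s : Fin n → Bool, a s) / 2 ^ n) 1 := by
      have hcard : (Finset.univ : Finset (Fin n → Bool)).card = 2 ^ n := by
        simp [Finset.card_univ]
      refine le_min ?_ ?_
      · exact (div_le_div_iff_of_pos_right (by positivity)).2
          (Finset.sum_le_sum fun s _ => min_le_left _ _)
      · rw [div_le_one (by positivity)]
        calc (∑ s : Fin n → Bool, min (a s) 1) ≤ ∑ s : Fin n → Bool, (1 : ℝ) :=
              Finset.sum_le_sum fun s _ => min_le_right _ _
          _ = 2 ^ n := by simp
    calc (∑ s : Fin n → Bool, g (Ss s ω)) / 2 ^ n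
        = ENNReal.ofReal ((∑ s : Fin n → Bool, min (a s) 1) / 2 ^ n) := by
          rw [ENNReal.ofReal_div_of_pos (by positivity),
            ENNReal.ofReal_sum_of_nonneg (fun s _ => hb0 s),
            ENNReal.ofReal_pow (by norm_num : (0:ℝ) ≤ 2), ENNReal.ofReal_ofNat]
      _ ≤ ENNReal.ofReal (min ((∑ s : Fin n → Bool, a s) / 2 ^ n) 1) :=
          ENNReal.ofReal_le_ofReal key
  -- Step 2 : lower bound the integral by I
  have hstep2 : I ≤ ∫⁻ ω, ENNReal.ofReal
      (min ((∑ s : Fin n → Bool, max (N (∑ i, signs s i • X i ω) - 1) 0) / 2 ^ n) 1) ∂μ := by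
    have h2 : (∑ s : Fin n → Bool, ∫⁻ ω, g (Ss s ω) ∂μ) = 2 ^ n * I := by
      rw [Finset.sum_congr rfl fun s _ => hlint s]
      simp [Finset.card_univ, mul_comm]
    have h3 : I = ∫⁻ ω, (∑ s : Fin n → Bool, g (Ss s ω)) / 2 ^ n ∂μ := by
      simp only [div_eq_mul_inv]
      have hm : ∀ s : Fin n → Bool, Measurable fun ω => g (Ss s ω) :=
        fun s => hgmeas.comp (hSsmeas s)
      rw [lintegral_mul_const' _ _ (by simp),
        lintegral_finset_sum _ (fun s _ => hm s), h2,
        mul_comm ((2:ℝ≥0∞) ^ n) I, mul_assoc,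
        ENNReal.mul_inv_cancel (by simp) (ENNReal.pow_ne_top ENNReal.ofNat_ne_top), mul_one]
    rw [h3]
    simp only [div_eq_mul_inv] at hpoint
    exact lintegral_mono hpoint
  refine le_trans ?_ hstep2
  -- Step 3 : I ≥ α * μ {N S > 1 + α}
  have hAmeas : MeasurableSet {ω | 1 + α < N (S ω)} :=
    measurableSet_lt measurable_const (hNmeas.comp hSmeas)
  calc ENNReal.ofReal α * μ {ω | 1 + α < N (∑ i, X i ω)}
      = ∫⁻ _ω in {ω | 1 + α < N (S ω)}, ENNReal.ofReal α ∂μ := by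
        rw [setLIntegral_const, mul_comm]
    _ ≤ ∫⁻ ω in {ω | 1 + α < N (S ω)}, g (S ω) ∂μ := by
        refine setLIntegral_mono (hgmeas.comp hSmeas) fun ω hω => ?_
        have hω' : 1 + α < N (S ω) := hω
        apply ENNReal.ofReal_le_ofReal
        refine le_min (le_max_of_le_left (by linarith)) hα1
    _ ≤ I := setLIntegral_le_lintegral _ _
end
end

section
/- Let X_1,…,X_n be independent symmetric random vectors in a normed space (E,‖·‖) (E a real separable Banach space with a continuous norm ‖·‖). Then E min{ E_ε (‖∑_{i=1}^n ε_i X_i‖ − 1)_+ , 1 } ≤ 16 P( ‖∑_{i=1}^n X_i‖ > 1 ), where ε₁,…,ε_n are independent Rademacher signs (each uniform on {−1,1}) independent of the X_i, E_ε denotes expectation over the signs only, and u_+ = max{u,0}. -/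
open MeasureTheory ProbabilityTheory
open scoped ENNReal BigOperators

noncomputable section

namespace ProxyAux

open Finset

attribute [local instance] Classical.propDecidable

variable {n : ℕ}

lemma abs_signs (s : Fin n → Bool) (i : Fin n) : |signs s i| = 1 := by
  unfold signs; split <;> norm_num

lemma signs_eq_neg {s t : Fin n → Bool} {i : Fin n} (h : t i = !(s i)) :
    signs t i = -signs s i := by
  unfold signs; rw [h]; cases s i <;> simp

lemma signs_congr {s t : Fin n → Bool} {i : Fin n} (h : t i = s i) :
    signs t i = signs s i := by unfold signs; rw [h]

section NormFacts

variable {E : Type*} [AddCommGroup E] [Module ℝ E] (N : E → ℝ)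
  (htri : ∀ a b : E, N (a + b) ≤ N a + N b)
  (hhom : ∀ (c : ℝ) (a : E), N (c • a) = |c| * N a)

include hhom in
lemma N_zero : N 0 = 0 := by
  have := hhom 0 0
  simpa using this

include hhom in
lemma N_neg (a : E) : N (-a) = N a := by
  have := hhom (-1) a
  simpa using this

include htri hhom in
lemma N_nonneg (a : E) : 0 ≤ N a := by
  have h1 := htri a (-a)
  rw [add_neg_cancel, N_zero N hhom, N_neg N hhom] at h1
  linarith

include htri hhom in
lemma N_sub_le (a b : E) : N (a - b) ≤ N a + N b := by
  rw [sub_eq_add_neg]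
  exact (htri a (-b)).trans (by rw [N_neg N hhom])

include htri hhom in
lemma N_sum {ι : Type*} (t : Finset ι) (f : ι → E) :
    N (∑ i ∈ t, f i) ≤ ∑ i ∈ t, N (f i) := by
  induction t using Finset.cons_induction with
  | empty => simp [N_zero N hhom]
  | cons i t hi ih =>
      rw [Finset.sum_cons, Finset.sum_cons]
      exact (htri _ _).trans (by linarith)

end NormFacts

lemma invol_card_le {G : Type*} [DecidableEq G] (A : Finset G) (f : G → G)
    (hinv : ∀ s, f (f s) = s) (hmap : ∀ s ∈ A, f s ∈ A)
    (P : G → Prop) (hP : ∀ s ∈ A, P s ∨ P (f s)) :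
    A.card ≤ 2 * (A.filter P).card := by
  have hsub : A ⊆ A.filter P ∪ (A.filter P).image f := by
    intro s hs
    rcases hP s hs with h | h
    · exact Finset.mem_union_left _ (Finset.mem_filter.2 ⟨hs, h⟩)
    · exact Finset.mem_union_right _
        (Finset.mem_image.2 ⟨f s, Finset.mem_filter.2 ⟨hmap s hs, h⟩, hinv s⟩)
  calc A.card ≤ (A.filter P ∪ (A.filter P).image f).card := Finset.card_le_card hsub
    _ ≤ (A.filter P).card + ((A.filter P).image f).card := Finset.card_union_le _ _
    _ ≤ (A.filter P).card + (A.filter P).card := by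
        exact Nat.add_le_add_left Finset.card_image_le _
    _ = 2 * (A.filter P).card := by ring

def mergeC (k : ℕ) (s t : Fin n → Bool) : Fin n → Bool :=
  fun i => if (i : ℕ) < k then s i else t i

lemma card_univ_bool : (Finset.univ : Finset (Fin n → Bool)).card = 2 ^ n := by
  classical
  rw [Finset.card_univ]
  rw [Fintype.card_fun, Fintype.card_bool, Fintype.card_fin]

lemma indep_card (k : ℕ) (p q : (Fin n → Bool) → Prop)
    [DecidablePred p] [DecidablePred q]
    (hp : ∀ s t, (∀ i : Fin n, (i : ℕ) < k → s i = t i) → (p s ↔ p t))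
    (hq : ∀ s t, (∀ i : Fin n, ¬ (i : ℕ) < k → s i = t i) → (q s ↔ q t)) :
    (univ.filter fun s => p s ∧ q s).card * 2 ^ n
      = (univ.filter p).card * (univ.filter q).card := by
  have hmerge1 : ∀ s t : Fin n → Bool, ∀ i : Fin n, (i : ℕ) < k → mergeC k s t i = s i := by
    intro s t i hi; simp [mergeC, hi]
  have hmerge2 : ∀ s t : Fin n → Bool, ∀ i : Fin n, ¬ (i : ℕ) < k → mergeC k s t i = t i := by
    intro s t i hi; simp [mergeC, hi]
  have hinv : ∀ a : (Fin n → Bool) × (Fin n → Bool),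
      (mergeC k (mergeC k a.1 a.2) (mergeC k a.2 a.1),
       mergeC k (mergeC k a.2 a.1) (mergeC k a.1 a.2)) = a := by
    rintro ⟨s, t⟩
    refine Prod.ext ?_ ?_ <;> funext i <;> by_cases hi : (i : ℕ) < k <;>
      simp [mergeC, hi]
  have key : ((univ.filter fun s => p s ∧ q s) ×ˢ (univ : Finset (Fin n → Bool))).card
      = ((univ.filter p) ×ˢ (univ.filter q)).card := by
    apply Finset.card_bij (fun a _ => (mergeC k a.1 a.2, mergeC k a.2 a.1))
    · rintro ⟨s, t⟩ hst
      simp only [Finset.mem_product, Finset.mem_filter, Finset.mem_univ, true_and] at hst ⊢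
      exact ⟨(hp _ s (fun i hi => hmerge1 s t i hi)).2 hst.1.1,
             (hq _ s (fun i hi => hmerge2 t s i hi)).2 hst.1.2⟩
    · rintro ⟨s, t⟩ hst ⟨s', t'⟩ hst' h
      have := congrArg (fun a : (Fin n → Bool) × (Fin n → Bool) =>
        (mergeC k a.1 a.2, mergeC k a.2 a.1)) h
      simpa [hinv ⟨s, t⟩, hinv ⟨s', t'⟩] using this
    · rintro ⟨u, v⟩ huv
      simp only [Finset.mem_product, Finset.mem_filter, Finset.mem_univ, true_and] at huv
      refine ⟨(mergeC k u v, mergeC k v u), ?_, hinv ⟨u, v⟩⟩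
      simp only [Finset.mem_product, Finset.mem_filter, Finset.mem_univ, true_and]
      exact ⟨⟨(hp _ u (fun i hi => hmerge1 u v i hi)).2 huv.1,
              (hq _ v (fun i hi => hmerge2 u v i hi)).2 huv.2⟩, trivial⟩
  rw [Finset.card_product, Finset.card_product, card_univ_bool] at key
  exact key

section Spart

variable {E : Type*} [AddCommGroup E] [Module ℝ E]

/-- Partial signed sum over indices `< k`. -/
def Spart (x : Fin n → E) (k : ℕ) (s : Fin n → Bool) : E :=
  ∑ i ∈ univ.filter (fun i : Fin n => (i : ℕ) < k), signs s i • x i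

lemma Spart_congr (x : Fin n → E) {k j : ℕ} (hjk : j ≤ k) {s t : Fin n → Bool}
    (h : ∀ i : Fin n, (i : ℕ) < k → s i = t i) : Spart x j s = Spart x j t := by
  refine Finset.sum_congr rfl fun i hi => ?_
  rw [signs_congr (h i (lt_of_lt_of_le (Finset.mem_filter.1 hi).2 hjk)).symm]

lemma Spart_zero (x : Fin n → E) (s : Fin n → Bool) : Spart x 0 s = 0 := by
  simp [Spart]

lemma Spart_top (x : Fin n → E) (s : Fin n → Bool) :
    Spart x n s = ∑ i, signs s i • x i := by
  unfold Spart
  rw [Finset.filter_true_of_mem fun i _ => i.isLt]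

lemma Spart_succ (x : Fin n → E) (j : ℕ) (hj : j < n) (s : Fin n → Bool) :
    Spart x (j + 1) s = Spart x j s + signs s ⟨j, hj⟩ • x ⟨j, hj⟩ := by
  have hins : (univ.filter fun i : Fin n => (i : ℕ) < j + 1)
      = insert ⟨j, hj⟩ (univ.filter fun i : Fin n => (i : ℕ) < j) := by
    ext i
    simp only [Finset.mem_filter, Finset.mem_univ, true_and, Finset.mem_insert, Fin.ext_iff]
    omega
  rw [Spart, hins, Finset.sum_insert (by simp), Spart, add_comm]

lemma Sfull_split (x : Fin n → E) (k : ℕ) (s : Fin n → Bool) :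
    (∑ i, signs s i • x i)
      = Spart x k s + ∑ i ∈ univ.filter (fun i : Fin n => ¬ (i : ℕ) < k), signs s i • x i :=
  (Finset.sum_filter_add_sum_filter_not univ _ _).symm

def flipGE (k : ℕ) (s : Fin n → Bool) : Fin n → Bool :=
  fun i => if (i : ℕ) < k then s i else !(s i)

def flipLT (k : ℕ) (s : Fin n → Bool) : Fin n → Bool :=
  fun i => if (i : ℕ) < k then !(s i) else s i

lemma flipGE_invol (k : ℕ) (s : Fin n → Bool) : flipGE k (flipGE k s) = s := by
  funext i; by_cases h : (i : ℕ) < k <;> simp [flipGE, h]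

lemma flipLT_invol (k : ℕ) (s : Fin n → Bool) : flipLT k (flipLT k s) = s := by
  funext i; by_cases h : (i : ℕ) < k <;> simp [flipLT, h]

lemma Spart_flipGE (x : Fin n → E) (k : ℕ) {j : ℕ} (hjk : j ≤ k) (s : Fin n → Bool) :
    Spart x j (flipGE k s) = Spart x j s :=
  Spart_congr x hjk fun i hi => by simp [flipGE, hi]

lemma suffix_flipGE (x : Fin n → E) (k : ℕ) (s : Fin n → Bool) :
    (∑ i ∈ univ.filter (fun i : Fin n => ¬ (i : ℕ) < k), signs (flipGE k s) i • x i)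
      = -∑ i ∈ univ.filter (fun i : Fin n => ¬ (i : ℕ) < k), signs s i • x i := by
  rw [← Finset.sum_neg_distrib]
  refine Finset.sum_congr rfl fun i hi => ?_
  have hi' : ¬ (i : ℕ) < k := (Finset.mem_filter.1 hi).2
  rw [signs_eq_neg (show flipGE k s i = !(s i) by simp [flipGE, hi']), neg_smul]

lemma Sfull_flipGE (x : Fin n → E) (k : ℕ) (s : Fin n → Bool) :
    (∑ i, signs (flipGE k s) i • x i)
      = (2 : ℝ) • Spart x k s - ∑ i, signs s i • x i := by
  rw [Sfull_split x k (flipGE k s), Sfull_split x k s, Spart_flipGE x k le_rfl,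
    suffix_flipGE, two_smul]
  abel

lemma Spart_flipLT (x : Fin n → E) (k : ℕ) (s : Fin n → Bool) :
    Spart x k (flipLT k s) = -Spart x k s := by
  rw [Spart, Spart, ← Finset.sum_neg_distrib]
  refine Finset.sum_congr rfl fun i hi => ?_
  have hi' : (i : ℕ) < k := (Finset.mem_filter.1 hi).2
  rw [signs_eq_neg (show flipLT k s i = !(s i) by simp [flipLT, hi']), neg_smul]

lemma suffix_flipLT (x : Fin n → E) (k : ℕ) (s : Fin n → Bool) :
    (∑ i ∈ univ.filter (fun i : Fin n => ¬ (i : ℕ) < k), signs (flipLT k s) i • x i)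
      = ∑ i ∈ univ.filter (fun i : Fin n => ¬ (i : ℕ) < k), signs s i • x i := by
  refine Finset.sum_congr rfl fun i hi => ?_
  have hi' : ¬ (i : ℕ) < k := (Finset.mem_filter.1 hi).2
  rw [signs_congr (show flipLT k s i = s i by simp [flipLT, hi'])]

lemma Sfull_flipLT (x : Fin n → E) (k : ℕ) (s : Fin n → Bool) :
    (∑ i, signs (flipLT k s) i • x i)
      = (∑ i, signs s i • x i) - (2 : ℝ) • Spart x k s := by
  rw [Sfull_split x k (flipLT k s), Sfull_split x k s, Spart_flipLT, suffix_flipLT, two_smul]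
  abel

lemma R_flipLT (x : Fin n → E) (k : ℕ) (s : Fin n → Bool) :
    (∑ i, signs (flipLT k s) i • x i) - Spart x k (flipLT k s)
      = (∑ i, signs s i • x i) - Spart x k s := by
  rw [Sfull_flipLT, Spart_flipLT, two_smul]
  abel

end Spart

section Steps

variable {E : Type*} [AddCommGroup E] [Module ℝ E] (N : E → ℝ)
  (htri : ∀ a b : E, N (a + b) ≤ N a + N b)
  (hhom : ∀ (c : ℝ) (a : E), N (c • a) = |c| * N a)
  (x : Fin n → E)

/-- The tail event. -/
def TailS (t : ℝ) : Finset (Fin n → Bool) :=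
  univ.filter fun s => t < N (∑ i, signs s i • x i)

/-- First-passage event at time `k`. -/
def Fev (t : ℝ) (k : ℕ) : Finset (Fin n → Bool) :=
  univ.filter fun s => t < N (Spart x k s) ∧ ∀ j < k, N (Spart x j s) ≤ t

include hhom in
lemma two_N_le (a b c : E) (hc : a + b = (2 : ℝ) • c)
    (htri' : N (a + b) ≤ N a + N b) : 2 * N c ≤ N a + N b := by
  have h2 : N ((2 : ℝ) • c) = 2 * N c := by rw [hhom]; norm_num
  rw [hc, h2] at htri'
  exact htri'

include htri hhom in
lemma levy_Fev (t : ℝ) (k : ℕ) :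
    (Fev N x t k).card
      ≤ 2 * ((Fev N x t k).filter fun s => t < N (∑ i, signs s i • x i)).card := by
  apply invol_card_le _ (flipGE k) (flipGE_invol k)
  · intro s hs
    simp only [Fev, Finset.mem_filter, Finset.mem_univ, true_and] at hs ⊢
    exact ⟨by rw [Spart_flipGE x k le_rfl]; exact hs.1,
      fun j hj => by rw [Spart_flipGE x k hj.le]; exact hs.2 j hj⟩
  · intro s hs
    simp only [Fev, Finset.mem_filter, Finset.mem_univ, true_and] at hs
    by_contra hcon
    push_neg at hcon
    obtain ⟨h1, h2⟩ := hcon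
    have hsum : (∑ i, signs (flipGE k s) i • x i) + ∑ i, signs s i • x i
        = (2 : ℝ) • Spart x k s := by
      rw [Sfull_flipGE]; abel
    have := two_N_le N hhom _ _ _ hsum (htri _ _)
    linarith [hs.1]

include htri hhom in
lemma levy_suffix (t : ℝ) (k : ℕ) :
    (univ.filter fun s : Fin n → Bool =>
        t < N ((∑ i, signs s i • x i) - Spart x k s)).card
      ≤ 2 * (TailS N x t).card := by
  have h := invol_card_le
    (univ.filter fun s : Fin n → Bool => t < N ((∑ i, signs s i • x i) - Spart x k s))
    (flipLT k) (flipLT_invol k)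
    (fun s hs => by
      simp only [Finset.mem_filter, Finset.mem_univ, true_and] at hs ⊢
      rw [R_flipLT]; exact hs)
    (fun s => t < N (∑ i, signs s i • x i))
    (fun s hs => by
      simp only [Finset.mem_filter, Finset.mem_univ, true_and] at hs
      by_contra hcon
      push_neg at hcon
      obtain ⟨h1, h2⟩ := hcon
      have hsum : (∑ i, signs s i • x i) + ∑ i, signs (flipLT k s) i • x i
          = (2 : ℝ) • ((∑ i, signs s i • x i) - Spart x k s) := by
        rw [Sfull_flipLT, smul_sub]; module
      have := two_N_le N hhom _ _ _ hsum (htri _ _)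
      linarith)
  refine h.trans ?_
  have : ((univ.filter fun s : Fin n → Bool =>
      t < N ((∑ i, signs s i • x i) - Spart x k s)).filter
        fun s => t < N (∑ i, signs s i • x i)) ⊆ TailS N x t := by
    intro s hs
    simp only [Finset.mem_filter, Finset.mem_univ, true_and, TailS] at hs ⊢
    exact hs.2
  exact Nat.mul_le_mul_left 2 (Finset.card_le_card this)

lemma indep_step (t : ℝ) (k : ℕ) :
    ((Fev N x t k).filter fun s =>
        t < N ((∑ i, signs s i • x i) - Spart x k s)).card * 2 ^ n
      = (Fev N x t k).card
        * (univ.filter fun s : Fin n → Bool =>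
            t < N ((∑ i, signs s i • x i) - Spart x k s)).card := by
  have hR : ∀ s : Fin n → Bool, (∑ i, signs s i • x i) - Spart x k s
      = ∑ i ∈ univ.filter (fun i : Fin n => ¬ (i : ℕ) < k), signs s i • x i := by
    intro s
    rw [Sfull_split x k s]
    abel
  have hp : ∀ s t' : Fin n → Bool, (∀ i : Fin n, (i : ℕ) < k → s i = t' i) →
      ((t < N (Spart x k s) ∧ ∀ j < k, N (Spart x j s) ≤ t)
        ↔ (t < N (Spart x k t') ∧ ∀ j < k, N (Spart x j t') ≤ t)) := by
    intro s t' h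
    rw [Spart_congr x le_rfl h]
    constructor
    · rintro ⟨h1, h2⟩
      exact ⟨h1, fun j hj => by rw [← Spart_congr x hj.le h]; exact h2 j hj⟩
    · rintro ⟨h1, h2⟩
      exact ⟨h1, fun j hj => by rw [Spart_congr x hj.le h]; exact h2 j hj⟩
  have hq : ∀ s t' : Fin n → Bool, (∀ i : Fin n, ¬ (i : ℕ) < k → s i = t' i) →
      ((t < N ((∑ i, signs s i • x i) - Spart x k s))
        ↔ (t < N ((∑ i, signs t' i • x i) - Spart x k t'))) := by
    intro s t' h
    rw [hR s, hR t']
    have : (∑ i ∈ univ.filter (fun i : Fin n => ¬ (i : ℕ) < k), signs s i • x i)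
        = ∑ i ∈ univ.filter (fun i : Fin n => ¬ (i : ℕ) < k), signs t' i • x i := by
      refine Finset.sum_congr rfl fun i hi => ?_
      rw [signs_congr (h i (Finset.mem_filter.1 hi).2).symm]
    rw [this]
  have h := indep_card k
    (fun s => t < N (Spart x k s) ∧ ∀ j < k, N (Spart x j s) ≤ t)
    (fun s => t < N ((∑ i, signs s i • x i) - Spart x k s)) hp hq
  unfold Fev
  rw [Finset.filter_filter]
  simpa using h

include htri hhom in
lemma norm_le_one (h2 : 2 * (TailS N x 1).card < 2 ^ n) (i : Fin n) : N (x i) ≤ 1 := by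
  set A := univ.filter (fun s : Fin n → Bool => ¬ 1 < N (∑ j, signs s j • x j)) with hA
  have hcardA : (TailS N x 1).card + A.card = 2 ^ n := by
    rw [TailS, hA, Finset.card_filter_add_card_filter_not, card_univ_bool]
  have h2A : 2 ^ n < 2 * A.card := by omega
  set f : (Fin n → Bool) → (Fin n → Bool) := fun s => Function.update s i (!(s i)) with hf
  have hfinv : ∀ s, f (f s) = s := by
    intro s
    simp only [hf, Function.update_self]
    rw [Function.update_idem, Bool.not_not, Function.update_eq_self]
  have hinj : Function.Injective f := Function.Involutive.injective hfinv
  have hinter : (A ∩ A.image f).Nonempty := by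
    by_contra hemp
    rw [Finset.not_nonempty_iff_eq_empty] at hemp
    have hdis : Disjoint A (A.image f) := Finset.disjoint_iff_inter_eq_empty.2 hemp
    have hcu := Finset.card_union_of_disjoint hdis
    have hle : (A ∪ A.image f).card ≤ 2 ^ n := by
      rw [← card_univ_bool]; exact Finset.card_le_univ _
    rw [hcu, Finset.card_image_of_injective _ hinj] at hle
    omega
  obtain ⟨s, hs⟩ := hinter
  rw [Finset.mem_inter] at hs
  have hs1 : N (∑ j, signs s j • x j) ≤ 1 :=
    not_lt.1 (Finset.mem_filter.1 hs.1).2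
  have hs2 : N (∑ j, signs (f s) j • x j) ≤ 1 := by
    obtain ⟨u, hu, hus⟩ := Finset.mem_image.1 hs.2
    have hfu : f s = u := by rw [← hus, hfinv]
    rw [hfu]
    exact not_lt.1 (Finset.mem_filter.1 hu).2
  have hdiff : (∑ j, signs s j • x j) - (∑ j, signs (f s) j • x j)
      = (2 * signs s i) • x i := by
    rw [← Finset.add_sum_erase _ _ (Finset.mem_univ i),
      ← Finset.add_sum_erase _ (fun j => signs (f s) j • x j) (Finset.mem_univ i)]
    have herase : (∑ j ∈ univ.erase i, signs (f s) j • x j)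
        = ∑ j ∈ univ.erase i, signs s j • x j := by
      refine Finset.sum_congr rfl fun j hj => ?_
      rw [signs_congr (show f s j = s j from
        Function.update_of_ne (Finset.mem_erase.1 hj).1 _ _)]
    rw [herase]
    have hfsi : signs (f s) i = -signs s i :=
      signs_eq_neg (by simp [hf])
    rw [hfsi]
    rw [show (2 * signs s i) • x i = signs s i • x i - (-signs s i) • x i by
      rw [← sub_smul]; ring_nf]
    abel
  have hle2 : N ((2 * signs s i) • x i) ≤ 2 := by
    rw [← hdiff]
    exact (N_sub_le N htri hhom _ _).trans (by linarith)
  rw [hhom, abs_mul, abs_signs, abs_two] at hle2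
  linarith

include htri hhom in
lemma recursion (hx1 : ∀ i, N (x i) ≤ 1) (t : ℝ) (ht : 1 ≤ t) :
    (TailS N x (3 * t)).card * 2 ^ n
      ≤ 4 * ((TailS N x t).card * (TailS N x t).card) := by
  classical
  set Q : ℕ → (Fin n → Bool) → Prop :=
    fun k s => t < N ((∑ i, signs s i • x i) - Spart x k s) with hQdef
  have hsub : TailS N x (3 * t)
      ⊆ (Finset.range (n + 1)).biUnion (fun k => (Fev N x t k).filter (Q k)) := by
    intro s hs
    have hs3 : 3 * t < N (∑ i, signs s i • x i) := (Finset.mem_filter.1 hs).2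
    have hex : ∃ k, t < N (Spart x k s) := ⟨n, by rw [Spart_top]; linarith⟩
    set k0 := Nat.find hex with hk0
    have hk0spec : t < N (Spart x k0 s) := Nat.find_spec hex
    have hk0min : ∀ j < k0, N (Spart x j s) ≤ t := fun j hj => not_lt.1 (Nat.find_min hex hj)
    have hk0le : k0 ≤ n := Nat.find_le (by rw [Spart_top]; linarith)
    have hk0pos : 0 < k0 := by
      rcases Nat.eq_zero_or_pos k0 with h | h
      · exfalso
        rw [h, Spart_zero, N_zero N hhom] at hk0spec
        linarith
      · exact h
    obtain ⟨j, hj⟩ : ∃ j, k0 = j + 1 := ⟨k0 - 1, by omega⟩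
    have hjn : j < n := by omega
    have hb : N (Spart x k0 s) ≤ 2 * t := by
      rw [hj, Spart_succ x j hjn]
      have h1 : N (Spart x j s) ≤ t := hk0min j (by omega)
      have h2 : N (signs s ⟨j, hjn⟩ • x ⟨j, hjn⟩) ≤ 1 := by
        rw [hhom, abs_signs, one_mul]; exact hx1 _
      have := htri (Spart x j s) (signs s ⟨j, hjn⟩ • x ⟨j, hjn⟩)
      linarith
    have hQk : Q k0 s := by
      have h3 := htri ((∑ i, signs s i • x i) - Spart x k0 s) (Spart x k0 s)
      rw [sub_add_cancel] at h3
      show t < _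
      linarith
    refine Finset.mem_biUnion.2 ⟨k0, Finset.mem_range.2 (by omega), ?_⟩
    refine Finset.mem_filter.2 ⟨Finset.mem_filter.2 ⟨Finset.mem_univ _, hk0spec, hk0min⟩, hQk⟩
  have h1 : (TailS N x (3 * t)).card
      ≤ ∑ k ∈ Finset.range (n + 1), ((Fev N x t k).filter (Q k)).card :=
    (Finset.card_le_card hsub).trans (Finset.card_biUnion_le)
  have hdisj : ∀ k ∈ Finset.range (n + 1), ∀ k' ∈ Finset.range (n + 1), k ≠ k' →
      Disjoint ((Fev N x t k).filter fun s => t < N (∑ i, signs s i • x i))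
        ((Fev N x t k').filter fun s => t < N (∑ i, signs s i • x i)) := by
    intro k _ k' _ hne
    rw [Finset.disjoint_left]
    intro s hsk hsk'
    have h1' := Finset.mem_filter.1 (Finset.mem_filter.1 hsk).1
    have h2' := Finset.mem_filter.1 (Finset.mem_filter.1 hsk').1
    rcases lt_or_gt_of_ne hne with h | h
    · exact absurd h1'.2.1 (not_lt.2 (h2'.2.2 k h))
    · exact absurd h2'.2.1 (not_lt.2 (h1'.2.2 k' h))
  have h5 : ∑ k ∈ Finset.range (n + 1),
      ((Fev N x t k).filter fun s => t < N (∑ i, signs s i • x i)).card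
      ≤ (TailS N x t).card := by
    rw [← Finset.card_biUnion hdisj]
    apply Finset.card_le_card
    intro s hs
    obtain ⟨k, _, hk⟩ := Finset.mem_biUnion.1 hs
    exact Finset.mem_filter.2 ⟨Finset.mem_univ _, (Finset.mem_filter.1 hk).2⟩
  calc (TailS N x (3 * t)).card * 2 ^ n
      ≤ (∑ k ∈ Finset.range (n + 1), ((Fev N x t k).filter (Q k)).card) * 2 ^ n := by
        exact Nat.mul_le_mul_right _ h1
    _ = ∑ k ∈ Finset.range (n + 1), ((Fev N x t k).filter (Q k)).card * 2 ^ n := by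
        rw [Finset.sum_mul]
    _ = ∑ k ∈ Finset.range (n + 1), (Fev N x t k).card
          * (univ.filter fun s : Fin n → Bool =>
              t < N ((∑ i, signs s i • x i) - Spart x k s)).card := by
        refine Finset.sum_congr rfl fun k _ => indep_step N x t k
    _ ≤ ∑ k ∈ Finset.range (n + 1),
          (2 * ((Fev N x t k).filter fun s => t < N (∑ i, signs s i • x i)).card)
            * (2 * (TailS N x t).card) := by
        refine Finset.sum_le_sum fun k _ => ?_
        exact Nat.mul_le_mul (levy_Fev N htri hhom x t k) (levy_suffix N htri hhom x t k)
    _ = 4 * (TailS N x t).card * ∑ k ∈ Finset.range (n + 1),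
          ((Fev N x t k).filter fun s => t < N (∑ i, signs s i • x i)).card := by
        rw [Finset.mul_sum]
        refine Finset.sum_congr rfl fun k _ => by ring
    _ ≤ 4 * (TailS N x t).card * (TailS N x t).card :=
        Nat.mul_le_mul_left _ h5
    _ = 4 * ((TailS N x t).card * (TailS N x t).card) := by ring

end Steps

lemma dyadic (K : ℕ) (y : ℝ) (h0 : 0 ≤ y) (hK : y ≤ 3 ^ K) :
    max (y - 1) 0
      ≤ ∑ k ∈ Finset.range K, (2 * 3 ^ k) * (if (3 : ℝ) ^ k < y then 1 else 0) := by
  induction K with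
  | zero =>
      simp only [Finset.range_zero, Finset.sum_empty]
      rw [pow_zero] at hK
      exact max_le (by linarith) le_rfl
  | succ K ih =>
      rcases le_or_gt y (3 ^ K) with h | h
      · refine (ih h).trans ?_
        refine Finset.sum_le_sum_of_subset_of_nonneg
          (Finset.range_subset_range.2 (Nat.le_succ K)) fun k _ _ => ?_
        positivity
      · have hall : ∀ k ∈ Finset.range (K + 1),
            (2 * (3:ℝ) ^ k) * (if (3 : ℝ) ^ k < y then 1 else 0) = 2 * 3 ^ k := by
          intro k hk
          rw [if_pos (lt_of_le_of_lt (pow_le_pow_right₀ (by norm_num)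
            (Finset.mem_range_succ_iff.1 hk)) h), mul_one]
        rw [Finset.sum_congr rfl hall]
        have hgeom : ∑ k ∈ Finset.range (K + 1), 2 * (3:ℝ) ^ k = 3 ^ (K + 1) - 1 := by
          rw [← Finset.mul_sum, geom_sum_eq (by norm_num : (3:ℝ) ≠ 1)]
          ring
        rw [hgeom]
        have h31 : (1:ℝ) ≤ 3 ^ (K + 1) := one_le_pow₀ (by norm_num)
        exact max_le (by linarith) (by linarith)

lemma geom34 (K : ℕ) : ∑ k ∈ Finset.range K, ((3:ℝ) / 4) ^ k ≤ 4 - 4 * (3 / 4) ^ K := by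
  induction K with
  | zero => simp
  | succ K ih =>
      rw [Finset.sum_range_succ, pow_succ]
      linarith

theorem cube_bound {E : Type*} [AddCommGroup E] [Module ℝ E] (N : E → ℝ)
    (htri : ∀ a b : E, N (a + b) ≤ N a + N b)
    (hhom : ∀ (c : ℝ) (a : E), N (c • a) = |c| * N a)
    (x : Fin n → E) :
    min ((∑ s : Fin n → Bool, max (N (∑ i, signs s i • x i) - 1) 0) / 2 ^ n) 1
      ≤ 16 * ((TailS N x 1).card : ℝ) / 2 ^ n := by
  have h2n : (0:ℝ) < 2 ^ n := by positivity
  set p : ℝ := ((TailS N x 1).card : ℝ) / 2 ^ n with hp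
  have hp0 : 0 ≤ p := by positivity
  have hgoal : 16 * ((TailS N x 1).card : ℝ) / 2 ^ n = 16 * p := by
    rw [hp]; ring
  rw [hgoal]
  rcases le_or_gt 1 (16 * p) with hcase | hcase
  · exact (min_le_right _ _).trans hcase
  · have hple : p < 1 / 16 := by linarith
    have hcard2 : 2 * (TailS N x 1).card < 2 ^ n := by
      have hreal : ((TailS N x 1).card : ℝ) * 16 < 2 ^ n := by
        rw [hp, div_lt_iff₀ h2n] at hple
        nlinarith
      have hnat : (TailS N x 1).card * 16 < 2 ^ n := by
        exact_mod_cast hreal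
      omega
    have hx1 : ∀ i, N (x i) ≤ 1 := norm_le_one N htri hhom x hcard2
    set r : ℕ → ℝ := fun k => ((TailS N x ((3:ℝ) ^ k)).card : ℝ) / 2 ^ n with hr
    have hr0 : ∀ k, 0 ≤ r k := fun k => by positivity
    have hrrec : ∀ k, r (k + 1) ≤ 4 * r k ^ 2 := by
      intro k
      have hnat := recursion N htri hhom x hx1 ((3:ℝ) ^ k)
        (one_le_pow₀ (by norm_num))
      have h3 : (3:ℝ) * 3 ^ k = 3 ^ (k + 1) := by ring
      rw [h3] at hnat
      have hcast : ((TailS N x ((3:ℝ) ^ (k+1))).card : ℝ) * 2 ^ n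
          ≤ 4 * (((TailS N x ((3:ℝ) ^ k)).card : ℝ) * ((TailS N x ((3:ℝ) ^ k)).card : ℝ)) := by
        exact_mod_cast hnat
      have hexp : 4 * r k ^ 2
          = (4 * (((TailS N x ((3:ℝ) ^ k)).card : ℝ) * ((TailS N x ((3:ℝ) ^ k)).card : ℝ)))
            / (2 ^ n * 2 ^ n) := by
        rw [hr]; ring
      rw [hr, hexp, div_le_div_iff₀ h2n (by positivity)]
      calc ((TailS N x ((3:ℝ) ^ (k+1))).card : ℝ) * (2 ^ n * 2 ^ n)
          = (((TailS N x ((3:ℝ) ^ (k+1))).card : ℝ) * 2 ^ n) * 2 ^ n := by ring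
        _ ≤ (4 * (((TailS N x ((3:ℝ) ^ k)).card : ℝ) * ((TailS N x ((3:ℝ) ^ k)).card : ℝ))) * 2 ^ n := by
            exact mul_le_mul_of_nonneg_right hcast h2n.le
    have hr0eq : r 0 = p := by
      rw [hr, hp]
      norm_num
    have hrb : ∀ k, r k ≤ p * (1 / 4) ^ k := by
      intro k
      induction k with
      | zero => rw [hr0eq]; simp
      | succ k ih =>
          have ha0 : (0:ℝ) ≤ (1 / 4 : ℝ) ^ k := by positivity
          have ha1 : ((1:ℝ) / 4) ^ k ≤ 1 := pow_le_one₀ (by norm_num) (by norm_num)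
          have hpa : p * (1 / 4) ^ k ≤ 1 / 16 := by nlinarith
          calc r (k + 1) ≤ 4 * r k ^ 2 := hrrec k
            _ ≤ 4 * (p * (1 / 4) ^ k) ^ 2 := by nlinarith [hr0 k, ih]
            _ ≤ p * (1 / 4) ^ (k + 1) := by
                rw [show ((1:ℝ) / 4) ^ (k + 1) = (1 / 4) ^ k * (1 / 4) from pow_succ _ _]
                nlinarith [mul_nonneg hp0 ha0]
    refine (min_le_left _ _).trans ?_
    have hpt : ∀ s : Fin n → Bool,
        max (N (∑ i, signs s i • x i) - 1) 0
          ≤ ∑ k ∈ Finset.range n,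
              (2 * 3 ^ k) * (if (3 : ℝ) ^ k < N (∑ i, signs s i • x i) then 1 else 0) := by
      intro s
      refine dyadic n _ (N_nonneg N htri hhom _) ?_
      calc N (∑ i, signs s i • x i) ≤ ∑ i, N (signs s i • x i) := N_sum N htri hhom _ _
        _ = ∑ i : Fin n, N (x i) := by
            refine Finset.sum_congr rfl fun i _ => ?_
            rw [hhom, abs_signs, one_mul]
        _ ≤ ∑ i : Fin n, (1:ℝ) := Finset.sum_le_sum fun i _ => hx1 i
        _ = n := by simp
        _ ≤ 3 ^ n := by
            exact_mod_cast (Nat.lt_pow_self (n := n) (by norm_num)).le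
    have hsum1 : (∑ s : Fin n → Bool, max (N (∑ i, signs s i • x i) - 1) 0) / 2 ^ n
        ≤ (∑ s : Fin n → Bool, ∑ k ∈ Finset.range n,
            (2 * 3 ^ k) * (if (3 : ℝ) ^ k < N (∑ i, signs s i • x i) then 1 else 0)) / 2 ^ n := by
      exact div_le_div_of_nonneg_right (Finset.sum_le_sum fun s _ => hpt s) h2n.le
    have hswap : (∑ s : Fin n → Bool, ∑ k ∈ Finset.range n,
            (2 * 3 ^ k) * (if (3 : ℝ) ^ k < N (∑ i, signs s i • x i) then 1 else 0))
        = ∑ k ∈ Finset.range n, (2 * 3 ^ k) * ((TailS N x ((3:ℝ) ^ k)).card : ℝ) := by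
      rw [Finset.sum_comm]
      refine Finset.sum_congr rfl fun k _ => ?_
      rw [← Finset.mul_sum, Finset.sum_boole]
      rfl
    calc (∑ s : Fin n → Bool, max (N (∑ i, signs s i • x i) - 1) 0) / 2 ^ n
        ≤ (∑ s : Fin n → Bool, ∑ k ∈ Finset.range n,
            (2 * 3 ^ k) * (if (3 : ℝ) ^ k < N (∑ i, signs s i • x i) then 1 else 0)) / 2 ^ n :=
          hsum1
      _ = ∑ k ∈ Finset.range n, (2 * 3 ^ k) * r k := by
          rw [hswap, Finset.sum_div]
          refine Finset.sum_congr rfl fun k _ => ?_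
          rw [hr]
          ring
      _ ≤ ∑ k ∈ Finset.range n, 2 * ((3:ℝ) / 4) ^ k * p := by
          refine Finset.sum_le_sum fun k _ => ?_
          have h34 : ((3:ℝ) / 4) ^ k = 3 ^ k * (1 / 4) ^ k := by
            rw [← mul_pow]; norm_num
          calc (2 * (3:ℝ) ^ k) * r k ≤ (2 * 3 ^ k) * (p * (1 / 4) ^ k) :=
                mul_le_mul_of_nonneg_left (hrb k) (by positivity)
            _ = 2 * ((3:ℝ) / 4) ^ k * p := by rw [h34]; ring
      _ ≤ 8 * p := by
          have hg := geom34 n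
          have hpow : (0:ℝ) ≤ (3 / 4) ^ n := by positivity
          calc ∑ k ∈ Finset.range n, 2 * ((3:ℝ) / 4) ^ k * p
              = (∑ k ∈ Finset.range n, ((3:ℝ) / 4) ^ k) * (2 * p) := by
                rw [Finset.sum_mul]
                exact Finset.sum_congr rfl fun k _ => by ring
            _ ≤ 4 * (2 * p) := by
                apply mul_le_mul_of_nonneg_right _ (by positivity)
                linarith
            _ = 8 * p := by ring
      _ ≤ 16 * p := by linarith

section MeasurePart

variable {Ω E : Type*} [MeasurableSpace Ω] [NormedAddCommGroup E] [NormedSpace ℝ E]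
  [TopologicalSpace.SeparableSpace E] [MeasurableSpace E] [BorelSpace E]

lemma secondCountable : SecondCountableTopology E :=
  UniformSpace.secondCountable_of_separable E

lemma map_tuple_eq_pi (μ : Measure Ω) [IsProbabilityMeasure μ] {n : ℕ}
    (Y : Fin n → Ω → E) (hYm : ∀ i, Measurable (Y i))
    (hY : iIndepFun Y μ) :
    μ.map (fun ω i => Y i ω) = Measure.pi (fun i => μ.map (Y i)) := by
  haveI : ∀ i, IsProbabilityMeasure (μ.map (Y i)) :=
    fun i => Measure.isProbabilityMeasure_map (hYm i).aemeasurable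
  refine (Measure.pi_eq fun s hs => ?_).symm
  rw [Measure.map_apply (measurable_pi_lambda _ fun i => hYm i) (MeasurableSet.univ_pi hs)]
  have hpre : (fun ω i => Y i ω) ⁻¹' (Set.univ.pi s) = ⋂ i, Y i ⁻¹' s i := by
    ext ω; simp [Set.mem_pi]
  rw [hpre, hY.meas_iInter (fun i => ⟨s i, hs i, rfl⟩)]
  exact Finset.prod_congr rfl fun i _ => (Measure.map_apply (hYm i) (hs i)).symm

lemma map_sign_smul (μ : Measure Ω) {X : Ω → E} (hm : Measurable X)
    (hsym : IsSymmetricRV μ X) (c : ℝ) (hc : c = 1 ∨ c = -1) :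
    μ.map (fun ω => c • X ω) = μ.map X := by
  rcases hc with rfl | rfl
  · simp
  · have : (fun ω => (-1 : ℝ) • X ω) = fun ω => -(X ω) := by
      funext ω; simp
    rw [this, ← hsym]

lemma map_signed_sum (μ : Measure Ω) [IsProbabilityMeasure μ] {n : ℕ}
    (X : Fin n → Ω → E) (hXmeas : ∀ i, Measurable (X i))
    (hXindep : iIndepFun X μ)
    (hXsymm : ∀ i, IsSymmetricRV μ (X i)) (s : Fin n → Bool)
    {B : Set E} (hB : MeasurableSet B) :
    μ {ω | (∑ i, signs s i • X i ω) ∈ B} = μ {ω | (∑ i, X i ω) ∈ B} := by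
  haveI := secondCountable (E := E)
  set Y : Fin n → Ω → E := fun i ω => signs s i • X i ω with hY
  have hYm : ∀ i, Measurable (Y i) := fun i => (hXmeas i).const_smul _
  have hYindep : iIndepFun Y μ :=
    hXindep.comp (fun i => fun v : E => signs s i • v)
      (fun i => (continuous_const_smul (signs s i)).measurable)
  have hmarg : ∀ i, μ.map (Y i) = μ.map (X i) := fun i =>
    map_sign_smul μ (hXmeas i) (hXsymm i) _ (by unfold signs; split <;> simp)
  have hpi : μ.map (fun ω i => Y i ω) = μ.map (fun ω i => X i ω) := by
    rw [map_tuple_eq_pi μ Y hYm hYindep, map_tuple_eq_pi μ X hXmeas hXindep]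
    exact congrArg _ (funext hmarg)
  have hsumMeas : Measurable (fun f : Fin n → E => ∑ i, f i) :=
    Finset.measurable_sum _ fun i _ => measurable_pi_apply i
  have h1 : μ {ω | (∑ i, Y i ω) ∈ B}
      = μ.map (fun ω i => Y i ω) ((fun f : Fin n → E => ∑ i, f i) ⁻¹' B) := by
    rw [Measure.map_apply (measurable_pi_lambda _ hYm) (hsumMeas hB)]
    rfl
  have h2 : μ {ω | (∑ i, X i ω) ∈ B}
      = μ.map (fun ω i => X i ω) ((fun f : Fin n → E => ∑ i, f i) ⁻¹' B) := by
    rw [Measure.map_apply (measurable_pi_lambda _ hXmeas) (hsumMeas hB)]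
    rfl
  rw [h1, hpi, ← h2]

end MeasurePart

end ProxyAux

/-- **Lemma (upper bound for the proxy).** For independent symmetric random vectors in a
normed space (with continuous norm `N` on the separable Banach space `E`),
`E min{E_ε (N(∑ εᵢXᵢ) − 1)₊, 1} ≤ 16 P(N(∑ Xᵢ) > 1)`. -/
theorem proxy_upper_bound
    {Ω E : Type*} [MeasurableSpace Ω] [NormedAddCommGroup E] [NormedSpace ℝ E]
    [CompleteSpace E] [TopologicalSpace.SeparableSpace E] [MeasurableSpace E] [BorelSpace E]
    (μ : Measure Ω) [IsProbabilityMeasure μ] (n : ℕ)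
    (X : Fin n → Ω → E) (hXmeas : ∀ i, Measurable (X i))
    (hXindep : iIndepFun X μ)
    (hXsymm : ∀ i, IsSymmetricRV μ (X i))
    (N : E → ℝ) (hN : IsContNorm N) :
    ∫⁻ ω, ENNReal.ofReal
        (min ((∑ s : Fin n → Bool, max (N (∑ i, signs s i • X i ω) - 1) 0) / 2 ^ n) 1) ∂μ
      ≤ 16 * μ {ω | 1 < N (∑ i, X i ω)} := by
  classical
  haveI := ProxyAux.secondCountable (E := E)
  obtain ⟨hNc, htri, hhom, -⟩ := hN
  have hTmeas : ∀ s : Fin n → Bool, Measurable fun ω => ∑ i, signs s i • X i ω :=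
    fun s => Finset.measurable_sum _ fun i _ => ((hXmeas i).const_smul _)
  have hB : MeasurableSet {y : E | 1 < N y} :=
    measurableSet_lt measurable_const hNc.measurable
  have hAmeas : ∀ s : Fin n → Bool,
      MeasurableSet {ω | 1 < N (∑ i, signs s i • X i ω)} := fun s => (hTmeas s) hB
  have hlaw : ∀ s : Fin n → Bool,
      μ {ω | 1 < N (∑ i, signs s i • X i ω)} = μ {ω | 1 < N (∑ i, X i ω)} := fun s =>
    ProxyAux.map_signed_sum μ X hXmeas hXindep hXsymm s hB
  set c : ℝ≥0∞ := ENNReal.ofReal (16 / 2 ^ n) with hc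
  have h2n : (0:ℝ) < 2 ^ n := by positivity
  have hpoint : ∀ ω, ENNReal.ofReal
      (min ((∑ s : Fin n → Bool, max (N (∑ i, signs s i • X i ω) - 1) 0) / 2 ^ n) 1)
      ≤ ∑ s : Fin n → Bool,
          Set.indicator {ω' | 1 < N (∑ i, signs s i • X i ω')} (fun _ => c) ω := by
    intro ω
    have hcube := ProxyAux.cube_bound N htri hhom (fun i => X i ω)
    have hstep1 : ENNReal.ofReal
        (min ((∑ s : Fin n → Bool, max (N (∑ i, signs s i • X i ω) - 1) 0) / 2 ^ n) 1)
        ≤ ENNReal.ofReal (16 * ((ProxyAux.TailS N (fun i => X i ω) 1).card : ℝ) / 2 ^ n) :=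
      ENNReal.ofReal_le_ofReal hcube
    refine hstep1.trans ?_
    have hre : 16 * ((ProxyAux.TailS N (fun i => X i ω) 1).card : ℝ) / 2 ^ n
        = ((ProxyAux.TailS N (fun i => X i ω) 1).card : ℝ) * (16 / 2 ^ n) := by ring
    rw [hre, ENNReal.ofReal_mul (by positivity), ENNReal.ofReal_natCast]
    have hind : (∑ s : Fin n → Bool,
        Set.indicator {ω' | 1 < N (∑ i, signs s i • X i ω')} (fun _ => c) ω)
        = ((ProxyAux.TailS N (fun i => X i ω) 1).card : ℝ≥0∞) * c := by
      have : ∀ s : Fin n → Bool,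
          Set.indicator {ω' | 1 < N (∑ i, signs s i • X i ω')} (fun _ => c) ω
            = if 1 < N (∑ i, signs s i • X i ω) then c else 0 := by
        intro s
        rw [Set.indicator_apply]
        simp only [Set.mem_setOf_eq]
      rw [Finset.sum_congr rfl fun s _ => this s, ← Finset.sum_filter,
        Finset.sum_const, nsmul_eq_mul]
      rfl
    rw [hind]
  refine (lintegral_mono hpoint).trans ?_
  rw [lintegral_finset_sum _ fun s _ => (measurable_const.indicator (hAmeas s))]
  have hint : ∀ s : Fin n → Bool,
      ∫⁻ ω, Set.indicator {ω' | 1 < N (∑ i, signs s i • X i ω')} (fun _ => c) ω ∂μ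
        = c * μ {ω | 1 < N (∑ i, X i ω)} := by
    intro s
    rw [lintegral_indicator_const (hAmeas s), hlaw s]
  rw [Finset.sum_congr rfl fun s _ => hint s, Finset.sum_const, ProxyAux.card_univ_bool,
    nsmul_eq_mul]
  have hcc : ((2 ^ n : ℕ) : ℝ≥0∞) * c = 16 := by
    rw [hc, ENNReal.ofReal_div_of_pos h2n]
    push_cast
    rw [show ENNReal.ofReal (2 ^ n) = 2 ^ n by
      rw [ENNReal.ofReal_pow (by norm_num)]; norm_num]
    rw [show ENNReal.ofReal 16 = 16 by norm_num [ENNReal.ofReal_ofNat]]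
    rw [ENNReal.mul_div_cancel (by positivity) (by simp)]
  rw [← mul_assoc, hcc]
end
end
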